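/- arXiv:1007.5229 — 9 statements merged into one kernel-verified Lean document; each statement's English description precedes it below -/
import Mathlib

section
/- The set 𝔻 = {(x,y) ∈ X × Y : ‖x‖ < 1 and ‖y‖ < p(‖x‖)} is an open, convex, balanced (c·(x,y) ∈ 𝔻 whenever (x,y) ∈ 𝔻 and c ∈ ℂ, |c| ≤ 1), bounded and absorbent subset of the product Banach space X × Y; consequently the Minkowski functional (gauge) of 𝔻 is a norm on X × Y whose open unit ball equals 𝔻. -/
open Set

/-- Continuous + midpoint-superadditive ≥ endpoints nonneg ⇒ nonneg on interval. -/
lemma aux_nonneg (g : ℝ → ℝ) (a b : ℝ) (hab : a ≤ b) (hg : ContinuousOn g (Icc a b))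
    (ha : 0 ≤ g a) (hb : 0 ≤ g b)
    (hmid : ∀ s ∈ Icc a b, ∀ t ∈ Icc a b, (g s + g t) / 2 ≤ g ((s + t) / 2)) :
    ∀ c ∈ Icc a b, 0 ≤ g c := by
  obtain ⟨t₀, ht₀, hmin⟩ := isCompact_Icc.exists_isMinOn (nonempty_Icc.2 hab) hg
  intro c hc
  refine le_trans ?_ (hmin hc)
  by_contra h
  push_neg at h
  have hat : a < t₀ := lt_of_le_of_ne ht₀.1 (by rintro rfl; linarith)
  have htb : t₀ < b := lt_of_le_of_ne ht₀.2 (by rintro rfl; linarith)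
  set δ := min (t₀ - a) (b - t₀) with hδ
  have hδpos : 0 < δ := lt_min (by linarith) (by linarith)
  have hu : t₀ - δ ∈ Icc a b := ⟨by have := min_le_left (t₀ - a) (b - t₀); linarith,
    by linarith⟩
  have hv : t₀ + δ ∈ Icc a b := ⟨by linarith,
    by have := min_le_right (t₀ - a) (b - t₀); linarith⟩
  have hm := hmid _ hu _ hv
  have heq : ((t₀ - δ) + (t₀ + δ)) / 2 = t₀ := by ring
  rw [heq] at hm
  have hsum : g t₀ ≤ g (t₀ - δ) + g (t₀ + δ) := by
    rcases min_cases (t₀ - a) (b - t₀) with ⟨h1, _⟩ | ⟨h1, _⟩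
    · have : t₀ - δ = a := by rw [hδ, h1]; ring
      rw [this]
      have h2 : g t₀ ≤ g (t₀ + δ) := hmin hv
      linarith
    · have : t₀ + δ = b := by rw [hδ, h1]; ring
      rw [this]
      have h2 : g t₀ ≤ g (t₀ - δ) := hmin hu
      linarith
  linarith

lemma aux_strict {s t a b c d : ℝ} (hs : 0 ≤ s) (ht : 0 ≤ t) (hst : s + t = 1)
    (h1 : a < c) (h2 : b < d) : s * a + t * b < s * c + t * d := by
  rcases eq_or_lt_of_le hs with rfl | hs'
  · have ht1 : t = 1 := by linarith
    subst ht1; nlinarith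
  · nlinarith [mul_lt_mul_of_pos_left h1 hs', mul_le_mul_of_nonneg_left h2.le ht]

/-- The set `𝔻 = {(x,y) : ‖x‖ < 1, ‖y‖ < 1, ‖y‖ < p ‖x‖}` is an open, convex, balanced,
bounded and absorbent subset of the product Banach space `X × Y`, and its Minkowski
functional (gauge) is a norm on `X × Y` whose open unit ball is exactly `𝔻`. -/
theorem stmt_0 {X Y : Type*} [NormedAddCommGroup X] [NormedSpace ℂ X] [CompleteSpace X]
    [NormedAddCommGroup Y] [NormedSpace ℂ Y] [CompleteSpace Y]
    (p : ℝ → ℝ)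
    (hp_cont : ContinuousOn p (Icc 0 1))
    (hp_maps : ∀ s ∈ Icc (0:ℝ) 1, p s ∈ Icc (0:ℝ) 1)
    (hp0 : p 0 = 1) (hp1 : p 1 = 0)
    (hp_anti : StrictAntiOn p (Icc 0 1))
    (hp_conc : ∀ s₁ ∈ Icc (0:ℝ) 1, ∀ s₂ ∈ Icc (0:ℝ) 1,
      (p s₁ + p s₂) / 2 ≤ p ((s₁ + s₂) / 2))
    (D : Set (X × Y))
    (hD : D = {z : X × Y | ‖z.1‖ < 1 ∧ ‖z.2‖ < 1 ∧ ‖z.2‖ < p ‖z.1‖}) :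
    IsOpen D ∧ Convex ℝ D ∧ Balanced ℂ D ∧ Bornology.IsBounded D ∧ Absorbent ℂ D ∧
      ((∀ (c : ℂ) (z : X × Y), gauge D (c • z) = ‖c‖ * gauge D z) ∧
       (∀ z₁ z₂ : X × Y, gauge D (z₁ + z₂) ≤ gauge D z₁ + gauge D z₂) ∧
       (∀ z : X × Y, gauge D z = 0 ↔ z = 0) ∧
       {z : X × Y | gauge D z < 1} = D) := by
  have hp_antitone : AntitoneOn p (Icc 0 1) := hp_anti.antitoneOn
  -- clamped version of p
  set P : ℝ → ℝ := fun s => p (min (max s 0) 1) with hP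
  have hclamp : ∀ s : ℝ, min (max s 0) 1 ∈ Icc (0:ℝ) 1 := fun s =>
    ⟨le_min (le_max_right s 0) one_pos.le, min_le_right _ _⟩
  have hPeq : ∀ s ∈ Icc (0:ℝ) 1, P s = p s := by
    intro s hs
    simp only [hP]
    rw [max_eq_left hs.1, min_eq_left hs.2]
  have hPcont : Continuous P :=
    hp_cont.comp_continuous (by fun_prop) hclamp
  -- openness
  have hopen : IsOpen D := by
    have hD2 : D = {z : X × Y | ‖z.1‖ < 1} ∩ {z : X × Y | ‖z.2‖ < 1} ∩
        {z : X × Y | ‖z.2‖ < P ‖z.1‖} := by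
      rw [hD]
      ext z
      simp only [mem_inter_iff, mem_setOf_eq]
      constructor
      · rintro ⟨h1, h2, h3⟩
        exact ⟨⟨h1, h2⟩, by rw [hPeq _ ⟨norm_nonneg _, h1.le⟩]; exact h3⟩
      · rintro ⟨⟨h1, h2⟩, h3⟩
        exact ⟨h1, h2, by rw [hPeq _ ⟨norm_nonneg _, h1.le⟩] at h3; exact h3⟩
    rw [hD2]
    refine ((IsOpen.inter ?_ ?_).inter ?_)
    · exact isOpen_lt (by fun_prop) continuous_const
    · exact isOpen_lt (by fun_prop) continuous_const
    · exact isOpen_lt (by fun_prop) (hPcont.comp (continuous_norm.comp continuous_fst))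
  -- concavity of p on [0,1]
  have hconc : ∀ a ∈ Icc (0:ℝ) 1, ∀ b ∈ Icc (0:ℝ) 1, ∀ t ∈ Icc (0:ℝ) 1,
      t * p a + (1 - t) * p b ≤ p (t * a + (1 - t) * b) := by
    have key : ∀ a ∈ Icc (0:ℝ) 1, ∀ b ∈ Icc (0:ℝ) 1, a ≤ b → ∀ t ∈ Icc (0:ℝ) 1,
        t * p a + (1 - t) * p b ≤ p (t * a + (1 - t) * b) := by
      intro a ha b hb hab t ht
      rcases eq_or_lt_of_le hab with rfl | hlt
      · have : t * a + (1 - t) * a = a := by ring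
        rw [this]; nlinarith [hp_maps a ha]
      · set g : ℝ → ℝ := fun s => (b - a) * p s - ((b - s) * p a + (s - a) * p b) with hg
        have hsub : Icc a b ⊆ Icc (0:ℝ) 1 := Icc_subset_Icc ha.1 hb.2
        have hgcont : ContinuousOn g (Icc a b) := by
          apply ContinuousOn.sub
          · exact continuousOn_const.mul (hp_cont.mono hsub)
          · fun_prop
        have hga : 0 ≤ g a := by simp only [hg]; ring_nf; exact le_refl _
        have hgb : 0 ≤ g b := by simp only [hg]; ring_nf; exact le_refl _
        have hmid : ∀ s ∈ Icc a b, ∀ u ∈ Icc a b, (g s + g u) / 2 ≤ g ((s + u) / 2) := by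
          intro s hs u hu
          have h1 := hp_conc s (hsub hs) u (hsub hu)
          simp only [hg]
          nlinarith [sub_pos.2 hlt]
        have hc : t * a + (1 - t) * b ∈ Icc a b := by
          constructor <;> nlinarith [ht.1, ht.2]
        have := aux_nonneg g a b hab hgcont hga hgb hmid _ hc
        simp only [hg] at this
        nlinarith [sub_pos.2 hlt]
    intro a ha b hb t ht
    rcases le_total a b with hab | hab
    · exact key a ha b hb hab t ht
    · have h := key b hb a ha hab (1 - t) ⟨by linarith [ht.2], by linarith [ht.1]⟩
      have e1 : (1 - t) * b + (1 - (1 - t)) * a = t * a + (1 - t) * b := by ring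
      rw [e1] at h
      linarith
  -- convexity
  have hconv : Convex ℝ D := by
    rw [hD]
    rintro z₁ ⟨h11, h12, h13⟩ z₂ ⟨h21, h22, h23⟩ s t hs ht hst
    simp only [mem_setOf_eq, Prod.fst_add, Prod.snd_add, Prod.smul_fst, Prod.smul_snd]
    have hn1 : ‖s • z₁.1 + t • z₂.1‖ ≤ s * ‖z₁.1‖ + t * ‖z₂.1‖ := by
      refine (norm_add_le _ _).trans ?_
      rw [norm_smul, norm_smul, Real.norm_of_nonneg hs, Real.norm_of_nonneg ht]
    have hn2 : ‖s • z₁.2 + t • z₂.2‖ ≤ s * ‖z₁.2‖ + t * ‖z₂.2‖ := by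
      refine (norm_add_le _ _).trans ?_
      rw [norm_smul, norm_smul, Real.norm_of_nonneg hs, Real.norm_of_nonneg ht]
    have hx1 : ‖z₁.1‖ ∈ Icc (0:ℝ) 1 := ⟨norm_nonneg _, h11.le⟩
    have hx2 : ‖z₂.1‖ ∈ Icc (0:ℝ) 1 := ⟨norm_nonneg _, h21.le⟩
    have hcomb : s * ‖z₁.1‖ + t * ‖z₂.1‖ < 1 := by
      have := aux_strict hs ht hst h11 h21; nlinarith
    have hcomb2 : s * ‖z₁.2‖ + t * ‖z₂.2‖ < 1 := by
      have := aux_strict hs ht hst h12 h22; nlinarith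
    refine ⟨lt_of_le_of_lt hn1 hcomb, lt_of_le_of_lt hn2 hcomb2, ?_⟩
    have h4 : s * p ‖z₁.1‖ + (1 - s) * p ‖z₂.1‖ ≤ p (s * ‖z₁.1‖ + (1 - s) * ‖z₂.1‖) :=
      hconc _ hx1 _ hx2 s ⟨hs, by linarith⟩
    have hts : t = 1 - s := by linarith
    rw [← hts] at h4
    have h5 : p (s * ‖z₁.1‖ + t * ‖z₂.1‖) ≤ p ‖s • z₁.1 + t • z₂.1‖ := by
      refine hp_antitone ⟨norm_nonneg _, (hn1.trans_lt hcomb).le⟩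
        ⟨by positivity, hcomb.le⟩ hn1
    have h6 := aux_strict hs ht hst h13 h23
    linarith
  -- balanced
  have hbal : Balanced ℂ D := by
    intro c hc
    rintro x ⟨z, hz, rfl⟩
    rw [hD] at hz ⊢
    obtain ⟨h1, h2, h3⟩ := hz
    simp only [mem_setOf_eq, Prod.smul_fst, Prod.smul_snd, norm_smul]
    have hcn : 0 ≤ ‖c‖ := norm_nonneg c
    have e1 : ‖c‖ * ‖z.1‖ ≤ ‖z.1‖ := by nlinarith [norm_nonneg z.1]
    have e2 : ‖c‖ * ‖z.2‖ ≤ ‖z.2‖ := by nlinarith [norm_nonneg z.2]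
    refine ⟨e1.trans_lt h1, e2.trans_lt h2, ?_⟩
    have h4 : p ‖z.1‖ ≤ p (‖c‖ * ‖z.1‖) :=
      hp_antitone ⟨by positivity, (e1.trans h1.le)⟩ ⟨norm_nonneg _, h1.le⟩ e1
    linarith
  -- bounded
  have hbdd : Bornology.IsBounded D := by
    have hsub : D ⊆ Metric.ball (0 : X × Y) 1 := by
      intro z hz
      rw [hD] at hz
      rw [mem_ball_zero_iff, Prod.norm_def]
      exact max_lt hz.1 hz.2.1
    exact Metric.isBounded_ball.subset hsub
  -- 0 ∈ D
  have h0mem : (0 : X × Y) ∈ D := by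
    rw [hD]
    simp only [mem_setOf_eq, Prod.fst_zero, Prod.snd_zero, norm_zero, hp0]
    exact ⟨one_pos, one_pos, one_pos⟩
  have hnhds : D ∈ nhds (0 : X × Y) := hopen.mem_nhds h0mem
  have habsC : Absorbent ℂ D := absorbent_nhds_zero hnhds
  have habsR : Absorbent ℝ D := absorbent_nhds_zero hnhds
  have hvnb : Bornology.IsVonNBounded ℝ D := NormedSpace.isVonNBounded_iff ℝ |>.2 hbdd
  refine ⟨hopen, hconv, hbal, hbdd, habsC, ?_, ?_, ?_, ?_⟩
  · exact fun c z => gauge_smul hbal c z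
  · exact fun z₁ z₂ => gauge_add_le hconv habsR z₁ z₂
  · exact fun z => gauge_eq_zero habsR hvnb
  · exact gauge_lt_one_eq_self_of_isOpen hconv h0mem hopen
end

section
/- For every (x,y) ∈ X × Y with y ≠ 0 there exists a unique real λ > ‖x‖ such that ‖y‖ = λ·p(‖x‖/λ), and this λ equals the Minkowski functional (gauge) of the set 𝔻 evaluated at (x,y). -/
/-!
By the midpoint hypothesis and continuity, `p` is concave, hence
`t * p s + (1 - t) ≤ p (t * s)`. This says that the perspective
`f l = l * p (a / l)` satisfies `f l₂ - f l₁ ≥ l₂ - l₁` for `a ≤ l₁ ≤ l₂`, so `f` is strictly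
increasing on `[a, ∞)`; it vanishes at `a` and is at least `b` at `a + b`, so by the
intermediate value theorem it takes the value `b = ‖y‖` at exactly one `λ > a = ‖x‖`.
For `r > 0` the point `r⁻¹ • (x, y)` lies in `𝔻` iff `‖x‖ < r`, `‖y‖ < r` and `‖y‖ < f r`;
since `‖y‖ = λ * p (‖x‖ / λ) ≤ λ`, this happens iff `r > λ`, so the gauge is `λ`.
-/

open Set

theorem Icc_subset_of_isClosed_of_midpoint_mem {A : Set ℝ} (hA : IsClosed A) {a b : ℝ}
    (ha : a ∈ A) (hb : b ∈ A) (hmid : ∀ x ∈ A, ∀ y ∈ A, (x + y) / 2 ∈ A) :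
    Icc a b ⊆ A := by
  intro t ht
  by_contra htA
  -- the nearest points of `A` on either side of `t` would have their midpoint in the gap
  obtain ⟨u, ⟨huA, hau, hut⟩, hu⟩ : ∃ u ∈ A ∩ Icc a t, ∀ w ∈ A ∩ Icc a t, w ≤ u :=
    ⟨_, (hA.inter isClosed_Icc).csSup_mem ⟨a, ha, le_rfl, ht.1⟩ (bddAbove_Icc.mono
      inter_subset_right), fun w hw => le_csSup (bddAbove_Icc.mono inter_subset_right) hw⟩
  obtain ⟨v, ⟨hvA, htv, hvb⟩, hv⟩ : ∃ v ∈ A ∩ Icc t b, ∀ w ∈ A ∩ Icc t b, v ≤ w :=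
    ⟨_, (hA.inter isClosed_Icc).csInf_mem ⟨b, hb, ht.2, le_rfl⟩ (bddBelow_Icc.mono
      inter_subset_right), fun w hw => csInf_le (bddBelow_Icc.mono inter_subset_right) hw⟩
  have hut' : u < t := hut.lt_of_ne (by rintro rfl; exact htA huA)
  have htv' : t < v := htv.lt_of_ne (by rintro rfl; exact htA hvA)
  have hmA := hmid u huA v hvA
  rcases le_total ((u + v) / 2) t with h | h
  · linarith [hu _ ⟨hmA, by linarith, h⟩]
  · linarith [hv _ ⟨hmA, h, by linarith⟩]

theorem concaveOn_of_midpoint {s : Set ℝ} {p : ℝ → ℝ} (hs : Convex ℝ s)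
    (hp_cont : ContinuousOn p s)
    (hp_mid : ∀ s₁ ∈ s, ∀ s₂ ∈ s, (p s₁ + p s₂) / 2 ≤ p ((s₁ + s₂) / 2)) :
    ConcaveOn ℝ s p := by
  refine ⟨hs, fun u hu v hv a b ha hb hab => ?_⟩
  obtain rfl : b = 1 - a := by linarith
  let seg : ℝ → ℝ := fun t => t * u + (1 - t) * v
  have hseg : MapsTo seg (Icc 0 1) s := fun t ht =>
    hs hu hv ht.1 (by linarith [ht.2]) (by ring)
  let A := Icc 0 1 ∩ (fun t => p (seg t) - (t * p u + (1 - t) * p v)) ⁻¹' Ici 0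
  have hA : IsClosed A :=
    ((hp_cont.comp (by fun_prop) hseg).sub (by fun_prop)).preimage_isClosed_of_isClosed
      isClosed_Icc isClosed_Ici
  have hmid : ∀ t₁ ∈ A, ∀ t₂ ∈ A, (t₁ + t₂) / 2 ∈ A := by
    rintro t₁ ⟨ht₁, hpt₁⟩ t₂ ⟨ht₂, hpt₂⟩
    have key := hp_mid _ (hseg ht₁) _ (hseg ht₂)
    have hseg_mid : (seg t₁ + seg t₂) / 2 = seg ((t₁ + t₂) / 2) := by simp only [seg]; ring
    rw [hseg_mid] at key
    refine ⟨⟨by linarith [ht₁.1, ht₂.1], by linarith [ht₁.2, ht₂.2]⟩, ?_⟩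
    simp only [mem_preimage, mem_Ici, sub_nonneg] at hpt₁ hpt₂ ⊢
    linarith
  have h0 : (0 : ℝ) ∈ A := by simp [A, seg]
  have h1 : (1 : ℝ) ∈ A := by simp [A, seg]
  have := (Icc_subset_of_isClosed_of_midpoint_mem hA h0 h1 hmid ⟨ha, by linarith⟩).2
  simpa only [mem_preimage, mem_Ici, sub_nonneg, smul_eq_mul] using this

noncomputable def perspective (p : ℝ → ℝ) (a l : ℝ) : ℝ := l * p (a / l)

section Perspective

variable {p : ℝ → ℝ} {a : ℝ}

theorem div_mem_Icc_of_le (ha : 0 ≤ a) {l : ℝ} (hl : a ≤ l) : a / l ∈ Icc (0 : ℝ) 1 :=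
  ⟨div_nonneg ha (ha.trans hl), div_le_one_of_le₀ hl (ha.trans hl)⟩

theorem perspective_self (hp1 : p 1 = 0) : perspective p a a = 0 := by
  rcases eq_or_ne a 0 with rfl | ha
  · simp [perspective]
  · simp [perspective, div_self ha, hp1]

theorem perspective_le_self (hp_le : ∀ s ∈ Icc (0 : ℝ) 1, p s ≤ 1) (ha : 0 ≤ a) {l : ℝ}
    (hl : a ≤ l) : perspective p a l ≤ l :=
  mul_le_of_le_one_right (ha.trans hl) (hp_le _ (div_mem_Icc_of_le ha hl))

theorem continuousOn_perspective (hp_cont : ContinuousOn p (Icc 0 1)) (ha : 0 ≤ a) :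
    ContinuousOn (perspective p a) (Ici a) := by
  have hdiv : ContinuousOn (a / ·) (Ici a) := by
    rcases ha.eq_or_lt with rfl | ha
    · simpa only [zero_div] using continuousOn_const
    · exact continuousOn_const.div continuousOn_id fun l hl => (ha.trans_le hl).ne'
  exact continuousOn_id.mul (hp_cont.comp hdiv fun l hl => div_mem_Icc_of_le ha hl)

theorem perspective_add_sub_le (hp : ConcaveOn ℝ (Icc 0 1) p) (hp0 : p 0 = 1) (ha : 0 ≤ a)
    {l₁ l₂ : ℝ} (hl₁ : a ≤ l₁) (hl : l₁ ≤ l₂) :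
    perspective p a l₁ + (l₂ - l₁) ≤ perspective p a l₂ := by
  rcases (ha.trans hl₁).eq_or_lt with rfl | hl₁0
  · obtain rfl : a = 0 := le_antisymm hl₁ ha
    simp [perspective, hp0]
  have hl₂0 := hl₁0.trans_le hl
  -- concavity between `a / l₁` and `0` with weights `l₁ / l₂` and `1 - l₁ / l₂`
  have key := hp.2 (div_mem_Icc_of_le ha hl₁) (left_mem_Icc.2 zero_le_one)
    (div_nonneg hl₁0.le hl₂0.le) (sub_nonneg.2 (div_le_one_of_le₀ hl hl₂0.le))
    (add_sub_cancel _ _)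
  have hpt : l₁ / l₂ * (a / l₁) = a / l₂ := by field_simp
  simp only [smul_eq_mul, mul_zero, add_zero, hp0, mul_one, hpt] at key
  calc perspective p a l₁ + (l₂ - l₁) = l₂ * (l₁ / l₂ * p (a / l₁) + (1 - l₁ / l₂)) := by
        unfold perspective; field_simp
    _ ≤ perspective p a l₂ := mul_le_mul_of_nonneg_left key hl₂0.le

theorem strictMonoOn_perspective (hp : ConcaveOn ℝ (Icc 0 1) p) (hp0 : p 0 = 1)
    (ha : 0 ≤ a) : StrictMonoOn (perspective p a) (Ici a) := fun _ hl₁ _ _ hl =>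
  (lt_add_of_pos_right _ (sub_pos.2 hl)).trans_le (perspective_add_sub_le hp hp0 ha hl₁ hl.le)

theorem exists_perspective_eq (hp_cont : ContinuousOn p (Icc 0 1))
    (hp : ConcaveOn ℝ (Icc 0 1) p) (hp0 : p 0 = 1) (hp1 : p 1 = 0) (ha : 0 ≤ a) {b : ℝ}
    (hb : 0 < b) : ∃ l, a < l ∧ perspective p a l = b := by
  have hab : b ∈ Icc (perspective p a a) (perspective p a (a + b)) := by
    have := perspective_add_sub_le hp hp0 ha le_rfl (le_add_of_nonneg_right hb.le)
    rw [perspective_self hp1] at this ⊢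
    exact ⟨hb.le, by linarith⟩
  obtain ⟨l, hl, hfl⟩ := intermediate_value_Icc (le_add_of_nonneg_right hb.le)
    ((continuousOn_perspective hp_cont ha).mono Icc_subset_Ici_self) hab
  refine ⟨l, hl.1.lt_of_ne ?_, hfl⟩
  rintro rfl
  rw [perspective_self hp1] at hfl
  exact hb.ne hfl

end Perspective

section Gauge

variable {X Y : Type*} [NormedAddCommGroup X] [NormedSpace ℝ X] [NormedAddCommGroup Y]
  [NormedSpace ℝ Y] {p : ℝ → ℝ} {x : X} {y : Y}

variable (X Y) in
def normDomain (p : ℝ → ℝ) : Set (X × Y) := {z | ‖z.1‖ < 1 ∧ ‖z.2‖ < 1 ∧ ‖z.2‖ < p ‖z.1‖}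

theorem inv_smul_mem_normDomain_iff {r : ℝ} (hr : 0 < r) :
    r⁻¹ • (x, y) ∈ normDomain X Y p ↔
      ‖x‖ < r ∧ ‖y‖ < r ∧ ‖y‖ < perspective p ‖x‖ r := by
  simp only [normDomain, Prod.smul_mk, mem_ofPred_eq, norm_smul, norm_inv, Real.norm_eq_abs, abs_of_pos hr,
    inv_mul_eq_div, div_lt_one hr, div_lt_iff₀ hr, perspective, mul_comm r]

theorem gauge_eq_of_perspective_eq (hmono : StrictMonoOn (perspective p ‖x‖) (Ici ‖x‖))
    {l : ℝ} (hxl : ‖x‖ < l) (hyl : ‖y‖ ≤ l) (hl : perspective p ‖x‖ l = ‖y‖) :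
    gauge (normDomain X Y p) (x, y) = l := by
  rw [gauge_def', ← csInf_Ioi (a := l)]
  congr 1
  ext r
  simp only [mem_ofPred_eq, mem_Ioi]
  constructor
  · rintro ⟨hr, hmem⟩
    obtain ⟨hxr, -, hyr⟩ := (inv_smul_mem_normDomain_iff hr).1 hmem
    exact (hmono.lt_iff_lt hxl.le hxr.le).1 (hl ▸ hyr)
  · intro hlr
    have hr := (norm_nonneg x).trans_lt (hxl.trans hlr)
    exact ⟨hr, (inv_smul_mem_normDomain_iff hr).2
      ⟨hxl.trans hlr, hyl.trans_lt hlr, hl ▸ hmono hxl.le (hxl.trans hlr).le hlr⟩⟩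

end Gauge

theorem stmt_1_general {X Y : Type*} [NormedAddCommGroup X] [NormedSpace ℂ X]
    [NormedAddCommGroup Y] [NormedSpace ℂ Y]
    (p : ℝ → ℝ)
    (hp_cont : ContinuousOn p (Icc 0 1))
    (hp_maps : ∀ s ∈ Icc (0:ℝ) 1, p s ∈ Icc (0:ℝ) 1)
    (hp0 : p 0 = 1) (hp1 : p 1 = 0)
    (hp_conc : ∀ s₁ ∈ Icc (0:ℝ) 1, ∀ s₂ ∈ Icc (0:ℝ) 1,
      (p s₁ + p s₂) / 2 ≤ p ((s₁ + s₂) / 2))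
    (D : Set (X × Y))
    (hD : D = {z : X × Y | ‖z.1‖ < 1 ∧ ‖z.2‖ < 1 ∧ ‖z.2‖ < p ‖z.1‖})
    (x : X) (y : Y) (hy : y ≠ 0) :
    (∃! l : ℝ, ‖x‖ < l ∧ ‖y‖ = l * p (‖x‖ / l)) ∧
      (‖x‖ < gauge D (x, y) ∧
        ‖y‖ = gauge D (x, y) * p (‖x‖ / gauge D (x, y))) := by
  have hp := concaveOn_of_midpoint (convex_Icc 0 1) hp_cont hp_conc
  have hx := norm_nonneg x
  obtain ⟨l, hxl, hl⟩ := exists_perspective_eq hp_cont hp hp0 hp1 hx (norm_pos_iff.2 hy)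
  have hmono := strictMonoOn_perspective hp hp0 hx
  have hyl : ‖y‖ ≤ l := hl ▸ perspective_le_self (fun s hs => (hp_maps s hs).2) hx hxl.le
  have hgauge : gauge D (x, y) = l := hD ▸ gauge_eq_of_perspective_eq hmono hxl hyl hl
  refine ⟨⟨l, ⟨hxl, hl.symm⟩, fun l' hl' => ?_⟩, hgauge ▸ ⟨hxl, hl.symm⟩⟩
  exact hmono.injOn hl'.1.le hxl.le (hl'.2.symm.trans hl.symm)

/-- For every `(x,y) ∈ X × Y` with `y ≠ 0` there exists a unique `λ > ‖x‖` such that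
`‖y‖ = λ * p (‖x‖ / λ)`, and this `λ` equals the Minkowski functional (gauge) of `𝔻`
at `(x,y)`. -/
theorem stmt_1 {X Y : Type*} [NormedAddCommGroup X] [NormedSpace ℂ X] [CompleteSpace X]
    [NormedAddCommGroup Y] [NormedSpace ℂ Y] [CompleteSpace Y]
    (p : ℝ → ℝ)
    (hp_cont : ContinuousOn p (Icc 0 1))
    (hp_maps : ∀ s ∈ Icc (0:ℝ) 1, p s ∈ Icc (0:ℝ) 1)
    (hp0 : p 0 = 1) (hp1 : p 1 = 0)
    (hp_anti : StrictAntiOn p (Icc 0 1))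
    (hp_conc : ∀ s₁ ∈ Icc (0:ℝ) 1, ∀ s₂ ∈ Icc (0:ℝ) 1,
      (p s₁ + p s₂) / 2 ≤ p ((s₁ + s₂) / 2))
    (D : Set (X × Y))
    (hD : D = {z : X × Y | ‖z.1‖ < 1 ∧ ‖z.2‖ < 1 ∧ ‖z.2‖ < p ‖z.1‖})
    (x : X) (y : Y) (hy : y ≠ 0) :
    (∃! l : ℝ, ‖x‖ < l ∧ ‖y‖ = l * p (‖x‖ / l)) ∧
      (‖x‖ < gauge D (x, y) ∧
        ‖y‖ = gauge D (x, y) * p (‖x‖ / gauge D (x, y))) :=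
  stmt_1_general p hp_cont hp_maps hp0 hp1 hp_conc D hD x y hy
end

section
/- Let {F_t}_{t≥0} be a family of maps F_t : 𝔻₁ → 𝔻₁ with F_{t+s} = F_t ∘ F_s for all t,s ≥ 0 and lim_{t→0⁺} F_t(x) = x for each x ∈ 𝔻₁. Let Γ̂(F_t,·) : 𝔻₁ → L(Y) satisfy: (i) Γ̂(F_t, F_s(x)) ∘ Γ̂(F_s, x) = Γ̂(F_{t+s}, x) for all t,s ≥ 0 and x ∈ 𝔻₁; (ii) ‖Γ̂(F_t,x)‖_{L(Y)} ≤ p(‖F_t(x)‖)/p(‖x‖); (iii) lim_{t→0⁺} ‖Γ̂(F_t,x) − id_Y‖_{L(Y)} = 0 for each x. Let {G_t}_{t≥0} be maps G_t : 𝔻₂ → 𝔻₂ with G_{t+s} = G_t ∘ G_s, lim_{t→0⁺} G_t(y) = y, ‖G_t(y)‖ ≤ ‖y‖ for all y ∈ 𝔻₂, and G_s(Γ̂(F_t,x)y) = Γ̂(F_t,x)(G_s(y)) whenever y ∈ 𝔻₂ and Γ̂(F_t,x)y ∈ 𝔻₂. Then the family F̃_t(x,y) := (F_t(x), Γ̂(F_t,x)(G_t(y)))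 is a one-parameter semigroup on 𝔻: each F̃_t maps 𝔻 into 𝔻, F̃_{t+s} = F̃_t ∘ F̃_s on 𝔻 for all t,s ≥ 0, and lim_{t→0⁺} F̃_t(x,y) = (x,y) for every (x,y) ∈ 𝔻. -/
open Set Filter Topology

/-!
The bound on `Γ̂` makes `Γ̂(F_t, x)` rescale the fibre radius `p ‖x‖` over `x` to at most the
fibre radius `p ‖F_t x‖` over `F_t x`, and `G_t` does not increase norms, so `F̃_t` maps each
fibre of `𝔻` into a fibre. The semigroup law comes from the chain rule for `Γ̂` once `G_t` is
commuted past `Γ̂(F_s, x)`, and continuity at `0⁺` from the joint continuity of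
`(A, v) ↦ A v`.
-/

theorem StrictAntiOn.pos_of_eq_zero_right {α β : Type*} [Preorder α] [Preorder β] [Zero β]
    {f : α → β} {a b s : α} (hf : StrictAntiOn f (Icc a b)) (hb : f b = 0) (hs : s ∈ Ico a b) :
    0 < f s :=
  hb ▸ hf ⟨hs.1, hs.2.le⟩ ⟨hs.1.trans hs.2.le, le_rfl⟩ hs.2

theorem ContinuousLinearMap.norm_apply_lt_of_opNorm_le_div {𝕜 E F : Type*}
    [NontriviallyNormedField 𝕜] [SeminormedAddCommGroup E] [SeminormedAddCommGroup F]
    [NormedSpace 𝕜 E] [NormedSpace 𝕜 F] (A : E →L[𝕜] F) {a b : ℝ} {v : E}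
    (ha : 0 < a) (hb : 0 < b) (hA : ‖A‖ ≤ a / b) (hv : ‖v‖ < b) : ‖A v‖ < a :=
  calc ‖A v‖ ≤ ‖A‖ * ‖v‖ := A.le_opNorm v
    _ ≤ a / b * ‖v‖ := by gcongr
    _ < a / b * b := by gcongr
    _ = a := div_mul_cancel₀ a hb.ne'

theorem Filter.Tendsto.clm_apply {𝕜 E F α : Type*} [NontriviallyNormedField 𝕜]
    [SeminormedAddCommGroup E] [SeminormedAddCommGroup F] [NormedSpace 𝕜 E] [NormedSpace 𝕜 F]
    {l : Filter α} {f : α → E →L[𝕜] F} {g : α → E} {A : E →L[𝕜] F} {v : E}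
    (hf : Tendsto f l (𝓝 A)) (hg : Tendsto g l (𝓝 v)) :
    Tendsto (fun t => f t (g t)) l (𝓝 (A v)) :=
  (isBoundedBilinearMap_apply.continuous.tendsto (A, v)).comp (hf.prodMk_nhds hg)

theorem stmt_9_general {X Y : Type*} [NormedAddCommGroup X] [NormedSpace ℂ X]
    [NormedAddCommGroup Y] [NormedSpace ℂ Y]
    (p : ℝ → ℝ)
    (hp_maps : ∀ s ∈ Icc (0:ℝ) 1, p s ∈ Icc (0:ℝ) 1)
    (hp1 : p 1 = 0)
    (hp_anti : StrictAntiOn p (Icc 0 1))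
    (D : Set (X × Y))
    (hD : D = {z : X × Y | ‖z.1‖ < 1 ∧ ‖z.2‖ < 1 ∧ ‖z.2‖ < p ‖z.1‖})
    (F : ℝ → X → X)
    (hF_maps : ∀ t : ℝ, 0 ≤ t → ∀ x : X, ‖x‖ < 1 → ‖F t x‖ < 1)
    (hF_sg : ∀ t s : ℝ, 0 ≤ t → 0 ≤ s → ∀ x : X, ‖x‖ < 1 →
      F (t + s) x = F t (F s x))
    (hF_cont : ∀ x : X, ‖x‖ < 1 →
      Tendsto (fun t => F t x) (𝓝[>] (0:ℝ)) (𝓝 x))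
    (Γ : ℝ → X → Y →L[ℂ] Y)
    (hΓ_chain : ∀ t s : ℝ, 0 ≤ t → 0 ≤ s → ∀ x : X, ‖x‖ < 1 →
      (Γ t (F s x)).comp (Γ s x) = Γ (t + s) x)
    (hΓ_bound : ∀ t : ℝ, 0 ≤ t → ∀ x : X, ‖x‖ < 1 →
      ‖Γ t x‖ ≤ p ‖F t x‖ / p ‖x‖)
    (hΓ_cont : ∀ x : X, ‖x‖ < 1 →
      Tendsto (fun t => Γ t x) (𝓝[>] (0:ℝ)) (𝓝 (ContinuousLinearMap.id ℂ Y)))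
    (G : ℝ → Y → Y)
    (hG_norm : ∀ t : ℝ, 0 ≤ t → ∀ y : Y, ‖y‖ < 1 → ‖G t y‖ ≤ ‖y‖)
    (hG_sg : ∀ t s : ℝ, 0 ≤ t → 0 ≤ s → ∀ y : Y, ‖y‖ < 1 →
      G (t + s) y = G t (G s y))
    (hG_cont : ∀ y : Y, ‖y‖ < 1 →
      Tendsto (fun t => G t y) (𝓝[>] (0:ℝ)) (𝓝 y))
    (hcomm : ∀ t s : ℝ, 0 ≤ t → 0 ≤ s → ∀ x : X, ‖x‖ < 1 → ∀ y : Y, ‖y‖ < 1 →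
      ‖Γ t x y‖ < 1 → G s (Γ t x y) = Γ t x (G s y))
    (Ftilde : ℝ → X × Y → X × Y)
    (hFt : ∀ (t : ℝ) (z : X × Y), Ftilde t z = (F t z.1, Γ t z.1 (G t z.2))) :
    (∀ t : ℝ, 0 ≤ t → MapsTo (Ftilde t) D D) ∧
    (∀ t s : ℝ, 0 ≤ t → 0 ≤ s → ∀ z ∈ D, Ftilde (t + s) z = Ftilde t (Ftilde s z)) ∧
    (∀ z ∈ D, Tendsto (fun t => Ftilde t z) (𝓝[>] (0:ℝ)) (𝓝 z)) := by
  obtain rfl : Ftilde = fun t z => (F t z.1, Γ t z.1 (G t z.2)) := funext₂ hFt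
  subst hD
  have hp_pos : ∀ x : X, ‖x‖ < 1 → 0 < p ‖x‖ := fun x hx =>
    hp_anti.pos_of_eq_zero_right hp1 ⟨norm_nonneg x, hx⟩
  have hp_le_one : ∀ x : X, ‖x‖ < 1 → p ‖x‖ ≤ 1 := fun x hx =>
    (hp_maps _ ⟨norm_nonneg x, hx.le⟩).2
  have hfibre : ∀ t, 0 ≤ t → ∀ x : X, ‖x‖ < 1 → ∀ y : Y, ‖y‖ < 1 → ‖y‖ < p ‖x‖ →
      ‖Γ t x (G t y)‖ < p ‖F t x‖ := fun t ht x hx y hy hyx =>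
    (Γ t x).norm_apply_lt_of_opNorm_le_div (hp_pos _ (hF_maps t ht x hx)) (hp_pos x hx)
      (hΓ_bound t ht x hx) ((hG_norm t ht y hy).trans_lt hyx)
  refine ⟨?maps, ?semigroup, ?continuity⟩
  case maps =>
    rintro t ht ⟨x, y⟩ ⟨hx, hy, hyx⟩
    have hFx := hF_maps t ht x hx
    exact ⟨hFx, (hfibre t ht x hx y hy hyx).trans_le (hp_le_one _ hFx), hfibre t ht x hx y hy hyx⟩
  case semigroup =>
    rintro t s ht hs ⟨x, y⟩ ⟨hx, hy, hyx⟩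
    have hGy : ‖G s y‖ < 1 := (hG_norm s hs y hy).trans_lt hy
    have hΓGy : ‖Γ s x (G s y)‖ < 1 :=
      (hfibre s hs x hx y hy hyx).trans_le (hp_le_one _ (hF_maps s hs x hx))
    refine Prod.ext (hF_sg t s ht hs x hx) ?_
    dsimp only
    rw [hcomm s t hs ht x hx _ hGy hΓGy, hG_sg t s ht hs y hy, ← hΓ_chain t s ht hs x hx]
    rfl
  case continuity =>
    rintro ⟨x, y⟩ ⟨hx, hy, -⟩
    simpa using (hF_cont x hx).prodMk_nhds ((hΓ_cont x hx).clm_apply (hG_cont y hy))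

/-- Extension of semigroups (Theorem 4.1): if `{F_t}` is a one-parameter continuous
semigroup on `𝔻₁`, `Γ̂(F_t,·)` satisfies the chain rule, the norm bound
`‖Γ̂(F_t,x)‖ ≤ p ‖F_t x‖ / p ‖x‖` and tends to `id_Y` as `t → 0⁺`, and `{G_t}` is a
one-parameter continuous semigroup of norm-nonincreasing self-maps of `𝔻₂` commuting
with the operators `Γ̂(F_t,x)`, then `F̃_t(x,y) = (F_t x, Γ̂(F_t,x)(G_t y))` is a
one-parameter continuous semigroup on `𝔻`. -/
theorem stmt_9 {X Y : Type*} [NormedAddCommGroup X] [NormedSpace ℂ X]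
    [NormedAddCommGroup Y] [NormedSpace ℂ Y]
    (p : ℝ → ℝ)
    (hp_cont : ContinuousOn p (Icc 0 1))
    (hp_maps : ∀ s ∈ Icc (0:ℝ) 1, p s ∈ Icc (0:ℝ) 1)
    (hp0 : p 0 = 1) (hp1 : p 1 = 0)
    (hp_anti : StrictAntiOn p (Icc 0 1))
    (D : Set (X × Y))
    (hD : D = {z : X × Y | ‖z.1‖ < 1 ∧ ‖z.2‖ < 1 ∧ ‖z.2‖ < p ‖z.1‖})
    (F : ℝ → X → X)
    (hF_maps : ∀ t : ℝ, 0 ≤ t → ∀ x : X, ‖x‖ < 1 → ‖F t x‖ < 1)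
    (hF_sg : ∀ t s : ℝ, 0 ≤ t → 0 ≤ s → ∀ x : X, ‖x‖ < 1 →
      F (t + s) x = F t (F s x))
    (hF_cont : ∀ x : X, ‖x‖ < 1 →
      Tendsto (fun t => F t x) (𝓝[>] (0:ℝ)) (𝓝 x))
    (Γ : ℝ → X → Y →L[ℂ] Y)
    (hΓ_chain : ∀ t s : ℝ, 0 ≤ t → 0 ≤ s → ∀ x : X, ‖x‖ < 1 →
      (Γ t (F s x)).comp (Γ s x) = Γ (t + s) x)
    (hΓ_bound : ∀ t : ℝ, 0 ≤ t → ∀ x : X, ‖x‖ < 1 →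
      ‖Γ t x‖ ≤ p ‖F t x‖ / p ‖x‖)
    (hΓ_cont : ∀ x : X, ‖x‖ < 1 →
      Tendsto (fun t => Γ t x) (𝓝[>] (0:ℝ)) (𝓝 (ContinuousLinearMap.id ℂ Y)))
    (G : ℝ → Y → Y)
    (hG_norm : ∀ t : ℝ, 0 ≤ t → ∀ y : Y, ‖y‖ < 1 → ‖G t y‖ ≤ ‖y‖)
    (hG_sg : ∀ t s : ℝ, 0 ≤ t → 0 ≤ s → ∀ y : Y, ‖y‖ < 1 →
      G (t + s) y = G t (G s y))
    (hG_cont : ∀ y : Y, ‖y‖ < 1 →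
      Tendsto (fun t => G t y) (𝓝[>] (0:ℝ)) (𝓝 y))
    (hcomm : ∀ t s : ℝ, 0 ≤ t → 0 ≤ s → ∀ x : X, ‖x‖ < 1 → ∀ y : Y, ‖y‖ < 1 →
      ‖Γ t x y‖ < 1 → G s (Γ t x y) = Γ t x (G s y))
    (Ftilde : ℝ → X × Y → X × Y)
    (hFt : ∀ (t : ℝ) (z : X × Y), Ftilde t z = (F t z.1, Γ t z.1 (G t z.2))) :
    (∀ t : ℝ, 0 ≤ t → MapsTo (Ftilde t) D D) ∧
    (∀ t s : ℝ, 0 ≤ t → 0 ≤ s → ∀ z ∈ D, Ftilde (t + s) z = Ftilde t (Ftilde s z)) ∧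
    (∀ z ∈ D, Tendsto (fun t => Ftilde t z) (𝓝[>] (0:ℝ)) (𝓝 z)) :=
  stmt_9_general p hp_maps hp1 hp_anti D hD F hF_maps hF_sg hF_cont Γ hΓ_chain hΓ_bound hΓ_cont G
    hG_norm hG_sg hG_cont hcomm Ftilde hFt
end

section
/- Under the hypotheses of the semigroup extension theorem, assume in addition: for each x ∈ 𝔻₁ the limit f(x) := lim_{t→0⁺} (x − F_t(x))/t exists in X; for each y ∈ 𝔻₂ the limit g(y) := lim_{t→0⁺} (y − G_t(y))/t exists in Y; and for each x ∈ 𝔻₁ there is a bounded linear operator A(x) ∈ L(Y) with lim_{t→0⁺} ‖t⁻¹(id_Y − Γ̂(F_t,x)) − A(x)‖_{L(Y)} = 0. Then the extended semigroup F̃_t(x,y) = (F_t(x), Γ̂(F_t,x)(G_t(y))) is generated, with generator f̃(x,y) := lim_{t→0⁺} ((x,y) − F̃_t(x,y))/t = (f(x), A(x)y + g(y)) for every (x,y) ∈ 𝔻. (Here A(x) plays the role of −∂Γ̂(id_X,x)[f] in the Fréchet-differentiable setting.) -/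
open Set Filter Topology

set_option maxHeartbeats 1000000 in
/-- Generator of the extended semigroup: if `F` is generated by `f`, `G` is generated
by `g`, and `t⁻¹(id_Y − Γ̂(F_t,x)) → A(x)` in operator norm as `t → 0⁺`, then the
extended semigroup `F̃_t(x,y) = (F_t x, Γ̂(F_t,x)(G_t y))` is generated, with generator
`f̃(x,y) = (f x, A(x) y + g y)`. -/
theorem stmt_11 {X Y : Type*} [NormedAddCommGroup X] [NormedSpace ℂ X]
    [NormedAddCommGroup Y] [NormedSpace ℂ Y]
    (p : ℝ → ℝ)
    (hp_cont : ContinuousOn p (Icc 0 1))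
    (hp_maps : ∀ s ∈ Icc (0:ℝ) 1, p s ∈ Icc (0:ℝ) 1)
    (hp0 : p 0 = 1) (hp1 : p 1 = 0)
    (hp_anti : StrictAntiOn p (Icc 0 1))
    (D : Set (X × Y))
    (hD : D = {z : X × Y | ‖z.1‖ < 1 ∧ ‖z.2‖ < 1 ∧ ‖z.2‖ < p ‖z.1‖})
    (F : ℝ → X → X)
    (hF_maps : ∀ t : ℝ, 0 ≤ t → ∀ x : X, ‖x‖ < 1 → ‖F t x‖ < 1)
    (hF_sg : ∀ t s : ℝ, 0 ≤ t → 0 ≤ s → ∀ x : X, ‖x‖ < 1 →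
      F (t + s) x = F t (F s x))
    (hF_cont : ∀ x : X, ‖x‖ < 1 →
      Tendsto (fun t => F t x) (𝓝[>] (0:ℝ)) (𝓝 x))
    (Γ : ℝ → X → Y →L[ℂ] Y)
    (hΓ_chain : ∀ t s : ℝ, 0 ≤ t → 0 ≤ s → ∀ x : X, ‖x‖ < 1 →
      (Γ t (F s x)).comp (Γ s x) = Γ (t + s) x)
    (hΓ_bound : ∀ t : ℝ, 0 ≤ t → ∀ x : X, ‖x‖ < 1 →
      ‖Γ t x‖ ≤ p ‖F t x‖ / p ‖x‖)
    (hΓ_cont : ∀ x : X, ‖x‖ < 1 →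
      Tendsto (fun t => Γ t x) (𝓝[>] (0:ℝ)) (𝓝 (ContinuousLinearMap.id ℂ Y)))
    (G : ℝ → Y → Y)
    (hG_norm : ∀ t : ℝ, 0 ≤ t → ∀ y : Y, ‖y‖ < 1 → ‖G t y‖ ≤ ‖y‖)
    (hG_sg : ∀ t s : ℝ, 0 ≤ t → 0 ≤ s → ∀ y : Y, ‖y‖ < 1 →
      G (t + s) y = G t (G s y))
    (hG_cont : ∀ y : Y, ‖y‖ < 1 →
      Tendsto (fun t => G t y) (𝓝[>] (0:ℝ)) (𝓝 y))
    (hcomm : ∀ t s : ℝ, 0 ≤ t → 0 ≤ s → ∀ x : X, ‖x‖ < 1 → ∀ y : Y, ‖y‖ < 1 →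
      ‖Γ t x y‖ < 1 → G s (Γ t x y) = Γ t x (G s y))
    (Ftilde : ℝ → X × Y → X × Y)
    (hFt : ∀ (t : ℝ) (z : X × Y), Ftilde t z = (F t z.1, Γ t z.1 (G t z.2)))
    -- generators of the original semigroups
    (f : X → X)
    (hf : ∀ x : X, ‖x‖ < 1 →
      Tendsto (fun t : ℝ => t⁻¹ • (x - F t x)) (𝓝[>] (0:ℝ)) (𝓝 (f x)))
    (g : Y → Y)
    (hg : ∀ y : Y, ‖y‖ < 1 →
      Tendsto (fun t : ℝ => t⁻¹ • (y - G t y)) (𝓝[>] (0:ℝ)) (𝓝 (g y)))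
    (A : X → Y →L[ℂ] Y)
    (hA : ∀ x : X, ‖x‖ < 1 →
      Tendsto (fun t : ℝ => t⁻¹ • (ContinuousLinearMap.id ℂ Y - Γ t x))
        (𝓝[>] (0:ℝ)) (𝓝 (A x))) :
    ∀ z ∈ D,
      Tendsto (fun t : ℝ => t⁻¹ • (z - Ftilde t z)) (𝓝[>] (0:ℝ))
        (𝓝 ((f z.1, A z.1 z.2 + g z.2) : X × Y)) := by
  intro z hz
  rw [hD] at hz
  obtain ⟨hx, hy, -⟩ := hz
  have h1 : Tendsto (fun t : ℝ => t⁻¹ • (z.1 - F t z.1)) (𝓝[>] (0:ℝ)) (𝓝 (f z.1)) :=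
    hf z.1 hx
  have hGy : Tendsto (fun t => G t z.2) (𝓝[>] (0:ℝ)) (𝓝 z.2) := hG_cont z.2 hy
  have hAx : Tendsto (fun t : ℝ => t⁻¹ • (ContinuousLinearMap.id ℂ Y - Γ t z.1))
      (𝓝[>] (0:ℝ)) (𝓝 (A z.1)) := hA z.1 hx
  have h2 : Tendsto (fun t : ℝ => t⁻¹ • (z.2 - Γ t z.1 (G t z.2))) (𝓝[>] (0:ℝ))
      (𝓝 (A z.1 z.2 + g z.2)) := by
    have key : ∀ t : ℝ, t⁻¹ • (z.2 - Γ t z.1 (G t z.2)) =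
        (t⁻¹ • (ContinuousLinearMap.id ℂ Y - Γ t z.1)) (G t z.2)
          + t⁻¹ • (z.2 - G t z.2) := by
      intro t
      simp only [ContinuousLinearMap.coe_smul', Pi.smul_apply,
        ContinuousLinearMap.sub_apply, ContinuousLinearMap.id_apply, smul_sub]
      abel
    simp only [key]
    have happ : Tendsto (fun t : ℝ =>
        (t⁻¹ • (ContinuousLinearMap.id ℂ Y - Γ t z.1)) (G t z.2)) (𝓝[>] (0:ℝ))
        (𝓝 (A z.1 z.2)) :=
      ((isBoundedBilinearMap_apply (𝕜 := ℂ)).continuous.tendsto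
        (A z.1, z.2)).comp (hAx.prodMk_nhds hGy)
    exact happ.add (hg z.2 hy)
  have hmain := h1.prodMk_nhds h2
  refine hmain.congr (fun t => ?_)
  rw [hFt]
  ext <;> simp
end

section
/- Under the hypotheses of the semigroup extension theorem, let in addition Ω ⊆ X, let h be a bijection of 𝔻₁ onto Ω, and let {Ψ_t}_{t≥0} be self-maps of Ω with h ∘ F_t = Ψ_t ∘ h for all t ≥ 0. Let Γ(h,·) and Γ(Ψ_t∘h,·) : 𝔻₁ → L(Y) take invertible values and satisfy the chain rule Γ(h, F_t(x)) ∘ Γ̂(F_t, x) = Γ(Ψ_t∘h, x) for all t ≥ 0, x ∈ 𝔻₁. Define Φ[h](x,y) := (h(x), Γ(h,x)y), Γ_Ω(Ψ_t, z) := Γ(Ψ_t∘h, h⁻¹(z)) ∘ Γ(h, h⁻¹(z))⁻¹ for z ∈ Ω, and Ψ̃_t(z,w) := (Ψ_t(z), Γ_Ω(Ψ_t,z)(Γ(h, h⁻¹(z)) G_t(Γ(h, h⁻¹(z))⁻¹ w))) on Φ[h](𝔻). Then Φ[h] ∘ F̃_t = Ψ̃_t ∘ Φ[h] on 𝔻 for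 every t ≥ 0, where F̃_t(x,y) = (F_t(x), Γ̂(F_t,x)(G_t(y))); consequently {Ψ̃_t}_{t≥0} is a semigroup on Φ[h](𝔻) and Φ[h] is an intertwining map for {F̃_t} and {Ψ̃_t}. -/
open Set Filter Topology

/-- Extension of conjugate semigroups (Theorem 4.2): if `h` intertwines the semigroup
`{F_t}` on `𝔻₁` with a semigroup `{Ψ_t}` on `Ω = h(𝔻₁)`, then the extension
`Φ[h](x,y) = (h x, Γ(h,x) y)` intertwines the extended semigroup
`F̃_t(x,y) = (F_t x, Γ̂(F_t,x)(G_t y))` with the semigroup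
`Ψ̃_t(z,w) = (Ψ_t z, Γ_Ω(Ψ_t,z)(Γ(h,h⁻¹ z)(G_t(Γ(h,h⁻¹ z)⁻¹ w))))` on `Φ[h](𝔻)`. -/
theorem stmt_12 {X Y : Type*} [NormedAddCommGroup X] [NormedSpace ℂ X]
    [NormedAddCommGroup Y] [NormedSpace ℂ Y]
    (p : ℝ → ℝ)
    (hp_cont : ContinuousOn p (Icc 0 1))
    (hp_maps : ∀ s ∈ Icc (0:ℝ) 1, p s ∈ Icc (0:ℝ) 1)
    (hp0 : p 0 = 1) (hp1 : p 1 = 0)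
    (hp_anti : StrictAntiOn p (Icc 0 1))
    (D : Set (X × Y))
    (hD : D = {z : X × Y | ‖z.1‖ < 1 ∧ ‖z.2‖ < 1 ∧ ‖z.2‖ < p ‖z.1‖})
    (F : ℝ → X → X)
    (hF_maps : ∀ t : ℝ, 0 ≤ t → ∀ x : X, ‖x‖ < 1 → ‖F t x‖ < 1)
    (hF_sg : ∀ t s : ℝ, 0 ≤ t → 0 ≤ s → ∀ x : X, ‖x‖ < 1 →
      F (t + s) x = F t (F s x))
    (hF_cont : ∀ x : X, ‖x‖ < 1 →
      Tendsto (fun t => F t x) (𝓝[>] (0:ℝ)) (𝓝 x))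
    (Γ : ℝ → X → Y →L[ℂ] Y)
    (hΓ_chain : ∀ t s : ℝ, 0 ≤ t → 0 ≤ s → ∀ x : X, ‖x‖ < 1 →
      (Γ t (F s x)).comp (Γ s x) = Γ (t + s) x)
    (hΓ_bound : ∀ t : ℝ, 0 ≤ t → ∀ x : X, ‖x‖ < 1 →
      ‖Γ t x‖ ≤ p ‖F t x‖ / p ‖x‖)
    (hΓ_cont : ∀ x : X, ‖x‖ < 1 →
      Tendsto (fun t => Γ t x) (𝓝[>] (0:ℝ)) (𝓝 (ContinuousLinearMap.id ℂ Y)))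
    (G : ℝ → Y → Y)
    (hG_norm : ∀ t : ℝ, 0 ≤ t → ∀ y : Y, ‖y‖ < 1 → ‖G t y‖ ≤ ‖y‖)
    (hG_sg : ∀ t s : ℝ, 0 ≤ t → 0 ≤ s → ∀ y : Y, ‖y‖ < 1 →
      G (t + s) y = G t (G s y))
    (hG_cont : ∀ y : Y, ‖y‖ < 1 →
      Tendsto (fun t => G t y) (𝓝[>] (0:ℝ)) (𝓝 y))
    (hcomm : ∀ t s : ℝ, 0 ≤ t → 0 ≤ s → ∀ x : X, ‖x‖ < 1 → ∀ y : Y, ‖y‖ < 1 →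
      ‖Γ t x y‖ < 1 → G s (Γ t x y) = Γ t x (G s y))
    (Ftilde : ℝ → X × Y → X × Y)
    (hFt : ∀ (t : ℝ) (z : X × Y), Ftilde t z = (F t z.1, Γ t z.1 (G t z.2)))
    -- conjugation data
    (Ω : Set X) (h : X → X)
    (hbij : BijOn h {x : X | ‖x‖ < 1} Ω)
    (hinv : X → X)
    (hli : ∀ w : X, ‖w‖ < 1 → hinv (h w) = w)
    (hri : ∀ x ∈ Ω, h (hinv x) = x)
    (hmapsinv : MapsTo hinv Ω {x : X | ‖x‖ < 1})
    (Ψ : ℝ → X → X)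
    (hΨ_maps : ∀ t : ℝ, 0 ≤ t → MapsTo (Ψ t) Ω Ω)
    (hintertw : ∀ t : ℝ, 0 ≤ t → ∀ x : X, ‖x‖ < 1 → h (F t x) = Ψ t (h x))
    (Γh : X → (Y ≃L[ℂ] Y))                 -- `Γ(h,·)`, invertible
    (ΓΨh : ℝ → X → (Y ≃L[ℂ] Y))            -- `Γ(Ψ_t∘h,·)`, invertible
    (hchain : ∀ t : ℝ, 0 ≤ t → ∀ x : X, ‖x‖ < 1 →
      ((Γh (F t x) : Y →L[ℂ] Y)).comp (Γ t x) = (ΓΨh t x : Y →L[ℂ] Y))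
    (Φh : X × Y → X × Y)
    (hΦh : ∀ z : X × Y, Φh z = (h z.1, Γh z.1 z.2))
    (Ψtilde : ℝ → X × Y → X × Y)
    (hΨt : ∀ (t : ℝ) (ζ : X × Y),
      Ψtilde t ζ = (Ψ t ζ.1,
        ((ΓΨh t (hinv ζ.1) : Y →L[ℂ] Y).comp ((Γh (hinv ζ.1)).symm : Y →L[ℂ] Y))
          ((Γh (hinv ζ.1)) (G t ((Γh (hinv ζ.1)).symm ζ.2))))) :
    (∀ t : ℝ, 0 ≤ t → ∀ z ∈ D, Φh (Ftilde t z) = Ψtilde t (Φh z)) ∧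
    (∀ t : ℝ, 0 ≤ t → MapsTo (Ψtilde t) (Φh '' D) (Φh '' D)) ∧
    (∀ t s : ℝ, 0 ≤ t → 0 ≤ s → ∀ ζ ∈ Φh '' D,
      Ψtilde (t + s) ζ = Ψtilde t (Ψtilde s ζ)) := by

  -- p is positive on [0,1)
  have hp_pos : ∀ s : ℝ, 0 ≤ s → s < 1 → 0 < p s := by
    intro s hs hs1
    have := hp_anti ⟨hs, hs1.le⟩ ⟨zero_le_one, le_refl 1⟩ hs1
    rw [hp1] at this
    exact this
  -- Ftilde maps D into D
  have hFtD : ∀ t : ℝ, 0 ≤ t → ∀ z ∈ D, Ftilde t z ∈ D := by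
    intro t ht z hz
    rw [hD] at hz ⊢
    obtain ⟨hx, hy, hyp⟩ := hz
    rw [hFt]
    have hFx : ‖F t z.1‖ < 1 := hF_maps t ht z.1 hx
    have hpx : 0 < p ‖z.1‖ := hp_pos _ (norm_nonneg _) hx
    have hpF : 0 < p ‖F t z.1‖ := hp_pos _ (norm_nonneg _) hFx
    have hpF1 : p ‖F t z.1‖ ≤ 1 :=
      (hp_maps _ ⟨norm_nonneg _, hFx.le⟩).2
    have hb : ‖Γ t z.1 (G t z.2)‖ < p ‖F t z.1‖ := by
      calc ‖Γ t z.1 (G t z.2)‖ ≤ ‖Γ t z.1‖ * ‖G t z.2‖ :=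
            (Γ t z.1).le_opNorm _
        _ ≤ (p ‖F t z.1‖ / p ‖z.1‖) * ‖z.2‖ := by
            apply mul_le_mul (hΓ_bound t ht z.1 hx) (hG_norm t ht z.2 hy)
              (norm_nonneg _)
            positivity
        _ < (p ‖F t z.1‖ / p ‖z.1‖) * p ‖z.1‖ := by
            apply mul_lt_mul_of_pos_left hyp
            positivity
        _ = p ‖F t z.1‖ := by field_simp
    exact ⟨hFx, hb.trans_le hpF1, hb⟩
  -- The intertwining identity
  have key : ∀ t : ℝ, 0 ≤ t → ∀ z ∈ D, Φh (Ftilde t z) = Ψtilde t (Φh z) := by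
    intro t ht z hz
    rw [hD] at hz
    obtain ⟨hx, hy, hyp⟩ := hz
    rw [hFt, hΦh, hΦh, hΨt]
    simp only
    rw [hli z.1 hx]
    have hsymm : (Γh z.1).symm ((Γh z.1) z.2) = z.2 := (Γh z.1).symm_apply_apply _
    rw [hsymm]
    refine Prod.ext (hintertw t ht z.1 hx) ?_
    simp only [ContinuousLinearMap.coe_comp', Function.comp_apply,
      ContinuousLinearEquiv.coe_coe]
    rw [(Γh z.1).symm_apply_apply]
    have := congrArg (fun (L : Y →L[ℂ] Y) => L (G t z.2)) (hchain t ht z.1 hx)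
    simpa using this
  refine ⟨key, ?_, ?_⟩
  · intro t ht ζ hζ
    obtain ⟨z, hz, rfl⟩ := hζ
    rw [← key t ht z hz]
    exact ⟨Ftilde t z, hFtD t ht z hz, rfl⟩
  · intro t s ht hs ζ hζ
    obtain ⟨z, hz, rfl⟩ := hζ
    have hz' : Ftilde s z ∈ D := hFtD s hs z hz
    rw [← key s hs z hz, ← key t ht _ hz', ← key (t+s) (by linarith) z hz]
    -- reduce to a semigroup identity for Ftilde
    congr 1
    rw [hD] at hz
    obtain ⟨hx, hy, hyp⟩ := hz
    rw [hFt, hFt, hFt]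
    simp only
    refine Prod.ext (hF_sg t s ht hs z.1 hx) ?_
    simp only
    have hGs1 : ‖G s z.2‖ < 1 := (hG_norm s hs z.2 hy).trans_lt hy
    have hΓGs1 : ‖Γ s z.1 (G s z.2)‖ < 1 := by
      rw [hD, hFt] at hz'
      exact hz'.2.1
    rw [hcomm s t hs ht z.1 hx (G s z.2) hGs1 hΓGs1,
      ← hG_sg t s ht hs z.2 hy]
    have := congrArg (fun (L : Y →L[ℂ] Y) => L (G (t + s) z.2))
      (hΓ_chain t s ht hs z.1 hx)
    simp only [ContinuousLinearMap.coe_comp', Function.comp_apply] at this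
    rw [this]
end

section
/- Let A ∈ L(X) and let h : 𝔻₁ → X be injective and A-spirallike, i.e. exp(−tA)(h(𝔻₁)) ⊆ h(𝔻₁) for all t ≥ 0; set F_t := h⁻¹ ∘ exp(−tA) ∘ h : 𝔻₁ → 𝔻₁. Let Γ(h,·) and Γ(exp(−tA)∘h,·) : 𝔻₁ → L(Y) be given with Γ(h,x) invertible, satisfying Γ(exp(−tA)∘h, x) = exp(−tC) ∘ Γ(h,x) for a fixed C ∈ L(Y) and all t ≥ 0, x ∈ 𝔻₁, together with the norm bound ‖Γ(h, F_t(x))⁻¹ ∘ Γ(exp(−tA)∘h, x)‖_{L(Y)} ≤ p(‖F_t(x)‖)/p(‖x‖). Let B ∈ L(Y) satisfy ‖exp(−tB)‖_{L(Y)} ≤ 1 for all t ≥ 0, B∘C = C∘B, and B∘Γ(h,x) = Γ(h,x)∘B for all x ∈ 𝔻₁. Then for every (z,w) in the image Φ[h](𝔻) of the extension Φ[h](x,y) := (h(x), Γ(h,x)y), and every t ≥ 0, the point (exp(−tA)z, exp(−t(B+C))w) also belongs to Φ[h](𝔻); i.e. Φ[h](𝔻) is invariant under the linear semigroup exp(−t·diag(A,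 B+C)), so Φ[h] is diag(A, B+C)-spirallike (as a block-diagonal operator on X × Y). -/
open Set NormedSpace

/-!
Given `(h x, Γ(h,x) y)` with `(x, y) ∈ 𝔻`, spirallikeness of `h` yields `x' = F_t x` in the unit
ball with `h x' = exp(−tA) h x`. Since `B` commutes with `C` and with `Γ(h,x')`, the point
`y' = exp(−tB) Γ(h,x')⁻¹ exp(−tC) Γ(h,x) y` satisfies `Γ(h,x') y' = exp(−t(B+C)) Γ(h,x) y`, and the
contraction bound on `exp(−tB)` together with the norm bound on `Γ` gives
`‖y'‖ ≤ p ‖x'‖ / p ‖x‖ · ‖y‖ < p ‖x'‖`, so `(x', y') ∈ 𝔻`.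
-/

theorem exp_add_of_commute_of_rclike (𝕂 : Type*) {𝔸 : Type*} [RCLike 𝕂] [NormedRing 𝔸]
    [NormedAlgebra 𝕂 𝔸] [CompleteSpace 𝔸] {x y : 𝔸} (hxy : Commute x y) :
    exp (x + y) = exp x * exp y := by
  have hball : ∀ z : 𝔸, z ∈ Metric.eball (0 : 𝔸) (expSeries 𝕂 𝔸).radius := fun z => by
    simp [expSeries_radius_eq_top]
  exact exp_add_of_commute_of_mem_ball hxy (hball x) (hball y)

theorem ContinuousLinearEquiv.apply_apply_symm_of_commute {R M : Type*} [Semiring R]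
    [AddCommMonoid M] [Module R M] [TopologicalSpace M] (G : M ≃L[R] M) {E : M →L[R] M}
    (hEG : Commute E (G : M →L[R] M)) (v : M) : G (E (G.symm v)) = E v := by
  simpa using congrArg (fun f : M →L[R] M => f (G.symm v)) hEG.eq.symm

theorem ContinuousLinearEquiv.apply_exp_smul_apply_symm_exp_smul {𝕂 Y : Type*} [RCLike 𝕂]
    [NormedAddCommGroup Y] [NormedSpace 𝕂 Y] [CompleteSpace Y] (G : Y ≃L[𝕂] Y)
    {B C : Y →L[𝕂] Y} (hBC : Commute B C) (hBG : Commute B (G : Y →L[𝕂] Y)) (s : 𝕂)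
    (w : Y) : G (exp (s • B) (G.symm (exp (s • C) w))) = exp (s • (B + C)) w := by
  rw [G.apply_apply_symm_of_commute ((hBG.smul_left s).exp_left), smul_add,
    exp_add_of_commute_of_rclike 𝕂 ((hBC.smul_left s).smul_right s)]
  rfl

theorem stmt_14_general {X Y : Type*} [NormedAddCommGroup X] [NormedSpace ℂ X]
    [NormedAddCommGroup Y] [NormedSpace ℂ Y] [CompleteSpace Y]
    (p : ℝ → ℝ)
    (hp_maps : ∀ s ∈ Icc (0:ℝ) 1, p s ∈ Icc (0:ℝ) 1)
    (hp1 : p 1 = 0)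
    (hp_anti : StrictAntiOn p (Icc 0 1))
    (D : Set (X × Y))
    (hD : D = {z : X × Y | ‖z.1‖ < 1 ∧ ‖z.2‖ < 1 ∧ ‖z.2‖ < p ‖z.1‖})
    (A : X →L[ℂ] X)
    (h : X → X)
    (hspiral : ∀ t : ℝ, 0 ≤ t → ∀ z ∈ h '' {x : X | ‖x‖ < 1},
      (NormedSpace.exp ((-(t : ℂ)) • A)) z ∈ h '' {x : X | ‖x‖ < 1})
    (hinv : X → X) (hli : ∀ x : X, ‖x‖ < 1 → hinv (h x) = x)
    (F : ℝ → X → X)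
    (hF : ∀ (t : ℝ) (x : X), F t x = hinv ((NormedSpace.exp ((-(t : ℂ)) • A)) (h x)))
    (C : Y →L[ℂ] Y)
    (Γh : X → (Y ≃L[ℂ] Y))              -- `Γ(h,·)`, invertible
    (Γeh : ℝ → X → Y →L[ℂ] Y)           -- `Γ(exp(−tA)∘h,·)`
    (hΓ_exp : ∀ t : ℝ, 0 ≤ t → ∀ x : X, ‖x‖ < 1 →
      Γeh t x = (NormedSpace.exp ((-(t : ℂ)) • C)).comp (Γh x : Y →L[ℂ] Y))
    (hΓ_bound : ∀ t : ℝ, 0 ≤ t → ∀ x : X, ‖x‖ < 1 →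
      ‖((Γh (F t x)).symm : Y →L[ℂ] Y).comp (Γeh t x)‖ ≤ p ‖F t x‖ / p ‖x‖)
    (B : Y →L[ℂ] Y)
    (hB_contr : ∀ t : ℝ, 0 ≤ t → ‖NormedSpace.exp ((-(t : ℂ)) • B)‖ ≤ 1)
    (hBC : B.comp C = C.comp B)
    (hBΓ : ∀ x : X, ‖x‖ < 1 →
      B.comp (Γh x : Y →L[ℂ] Y) = (Γh x : Y →L[ℂ] Y).comp B)
    (Φh : X × Y → X × Y)
    (hΦh : ∀ z : X × Y, Φh z = (h z.1, Γh z.1 z.2)) :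
    ∀ ζ ∈ Φh '' D, ∀ t : ℝ, 0 ≤ t →
      (((NormedSpace.exp ((-(t : ℂ)) • A)) ζ.1,
        (NormedSpace.exp ((-(t : ℂ)) • (B + C))) ζ.2) : X × Y) ∈ Φh '' D := by
  rintro _ ⟨⟨x, y⟩, hxy, rfl⟩ t ht
  rw [hD] at hxy ⊢
  obtain ⟨hx, -, hy⟩ := hxy
  obtain ⟨x', hx', hhx'⟩ := hspiral t ht (h x) ⟨x, hx, rfl⟩
  have hFx : F t x = x' := by rw [hF, ← hhx', hli x' hx']
  have hp_pos : ∀ {s : ℝ}, 0 ≤ s → s < 1 → 0 < p s := fun hs0 hs1 =>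
    hp1 ▸ hp_anti ⟨hs0, hs1.le⟩ ⟨zero_le_one, le_rfl⟩ hs1
  have hpx : 0 < p ‖x‖ := hp_pos (norm_nonneg x) hx
  have hpx' : 0 < p ‖x'‖ := hp_pos (norm_nonneg x') hx'
  set u := (Γh x').symm (Γeh t x y)
  have hy' : ‖exp (-(t : ℂ) • B) u‖ < p ‖x'‖ := calc
    ‖exp (-(t : ℂ) • B) u‖ ≤ 1 * ‖u‖ := (exp (-(t : ℂ) • B)).le_of_opNorm_le (hB_contr t ht) u
    _ ≤ p ‖x'‖ / p ‖x‖ * ‖y‖ := by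
      rw [one_mul]; exact ContinuousLinearMap.le_of_opNorm_le _ (hFx ▸ hΓ_bound t ht x hx) y
    _ < p ‖x'‖ / p ‖x‖ * p ‖x‖ := by gcongr
    _ = p ‖x'‖ := div_mul_cancel₀ _ hpx.ne'
  refine ⟨(x', exp (-(t : ℂ) • B) u),
    ⟨hx', hy'.trans_le (hp_maps _ ⟨norm_nonneg _, hx'.le⟩).2, hy'⟩, ?_⟩
  simp only [hΦh]
  rw [hhx', ← (Γh x').apply_exp_smul_apply_symm_exp_smul hBC (hBΓ x' hx')]
  simp only [u, hΓ_exp t ht x hx]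
  rfl

/-- Theorem 5.1 (spirallikeness of the extension): let `h : 𝔻₁ → X` be injective and
`A`-spirallike, `F_t = h⁻¹ ∘ exp(−tA) ∘ h`. If `Γ(exp(−tA)∘h, x) = exp(−tC) ∘ Γ(h,x)`
with the norm bound `‖Γ(h, F_t x)⁻¹ ∘ Γ(exp(−tA)∘h, x)‖ ≤ p ‖F_t x‖ / p ‖x‖`, and
`B ∈ L(Y)` satisfies `‖exp(−tB)‖ ≤ 1`, commutes with `C` and with every `Γ(h,x)`, then
the image of `Φ[h](x,y) = (h x, Γ(h,x) y)` is invariant under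
`(z,w) ↦ (exp(−tA) z, exp(−t(B+C)) w)` for all `t ≥ 0`; i.e. `Φ[h]` is
`diag(A, B+C)`-spirallike. -/
theorem stmt_14 {X Y : Type*} [NormedAddCommGroup X] [NormedSpace ℂ X] [CompleteSpace X]
    [NormedAddCommGroup Y] [NormedSpace ℂ Y] [CompleteSpace Y]
    (p : ℝ → ℝ)
    (hp_cont : ContinuousOn p (Icc 0 1))
    (hp_maps : ∀ s ∈ Icc (0:ℝ) 1, p s ∈ Icc (0:ℝ) 1)
    (hp0 : p 0 = 1) (hp1 : p 1 = 0)
    (hp_anti : StrictAntiOn p (Icc 0 1))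
    (D : Set (X × Y))
    (hD : D = {z : X × Y | ‖z.1‖ < 1 ∧ ‖z.2‖ < 1 ∧ ‖z.2‖ < p ‖z.1‖})
    (A : X →L[ℂ] X)
    (h : X → X) (hinj : InjOn h {x : X | ‖x‖ < 1})
    (hspiral : ∀ t : ℝ, 0 ≤ t → ∀ z ∈ h '' {x : X | ‖x‖ < 1},
      (NormedSpace.exp ((-(t : ℂ)) • A)) z ∈ h '' {x : X | ‖x‖ < 1})
    (hinv : X → X) (hli : ∀ x : X, ‖x‖ < 1 → hinv (h x) = x)
    (F : ℝ → X → X)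
    (hF : ∀ (t : ℝ) (x : X), F t x = hinv ((NormedSpace.exp ((-(t : ℂ)) • A)) (h x)))
    (C : Y →L[ℂ] Y)
    (Γh : X → (Y ≃L[ℂ] Y))              -- `Γ(h,·)`, invertible
    (Γeh : ℝ → X → Y →L[ℂ] Y)           -- `Γ(exp(−tA)∘h,·)`
    (hΓ_exp : ∀ t : ℝ, 0 ≤ t → ∀ x : X, ‖x‖ < 1 →
      Γeh t x = (NormedSpace.exp ((-(t : ℂ)) • C)).comp (Γh x : Y →L[ℂ] Y))
    (hΓ_bound : ∀ t : ℝ, 0 ≤ t → ∀ x : X, ‖x‖ < 1 →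
      ‖((Γh (F t x)).symm : Y →L[ℂ] Y).comp (Γeh t x)‖ ≤ p ‖F t x‖ / p ‖x‖)
    (B : Y →L[ℂ] Y)
    (hB_contr : ∀ t : ℝ, 0 ≤ t → ‖NormedSpace.exp ((-(t : ℂ)) • B)‖ ≤ 1)
    (hBC : B.comp C = C.comp B)
    (hBΓ : ∀ x : X, ‖x‖ < 1 →
      B.comp (Γh x : Y →L[ℂ] Y) = (Γh x : Y →L[ℂ] Y).comp B)
    (Φh : X × Y → X × Y)
    (hΦh : ∀ z : X × Y, Φh z = (h z.1, Γh z.1 z.2)) :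
    ∀ ζ ∈ Φh '' D, ∀ t : ℝ, 0 ≤ t →
      (((NormedSpace.exp ((-(t : ℂ)) • A)) ζ.1,
        (NormedSpace.exp ((-(t : ℂ)) • (B + C))) ζ.2) : X × Y) ∈ Φh '' D :=
  stmt_14_general p hp_maps hp1 hp_anti D hD A h hspiral hinv hli F hF C Γh Γeh hΓ_exp hΓ_bound B
    hB_contr hBC hBΓ Φh hΦh
end

section
/- Let τ ∈ X with ‖τ‖ = 1 and let h : 𝔻₁ → X be injective and convex in the direction τ, i.e. h(𝔻₁) + tτ ⊆ h(𝔻₁) for all t ≥ 0; set F_t := h⁻¹ ∘ (·+tτ) ∘ h : 𝔻₁ → 𝔻₁. Let Γ(h,·) and Γ(h+tτ,·) : 𝔻₁ → L(Y) be given with Γ(h,x) invertible, satisfying Γ(h+tτ, x) = exp(−tC) ∘ Γ(h,x) for a fixed C ∈ L(Y) and all t ≥ 0, x ∈ 𝔻₁, together with the norm bound ‖Γ(h, F_t(x))⁻¹ ∘ Γ(h+tτ, x)‖_{L(Y)} ≤ p(‖F_t(x)‖)/p(‖x‖). Let B ∈ L(Y) satisfy ‖exp(−tB)‖_{L(Y)}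 ≤ 1 for all t ≥ 0, B∘C = C∘B, and B∘Γ(h,x) = Γ(h,x)∘B for all x ∈ 𝔻₁. Then for every point (z,w) in the image Φ[h](𝔻) of the extension Φ[h](x,y) := (h(x), Γ(h,x)y), the set Φ[h](𝔻) contains the curve {(z + tτ, exp(−t(B+C))w) : t ≥ 0}. In particular, if Γ(h+tτ, x) = Γ(h,x) for all t ≥ 0 and x ∈ 𝔻₁ (i.e. C = 0) and B = 0, then Φ[h] is convex in the direction (τ, 0). -/
open Set

/-!
Given `(x, y) ∈ 𝔻` and `t ≥ 0`, convexity of `h(𝔻₁)` in the direction `τ` gives `x' = F_t x`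
with `h x' = h x + tτ`, and the preimage of `(h x + tτ, exp(−t(B+C)) Γ(h,x) y)` under `Φ[h]` is
`(x', Γ(h,x')⁻¹ exp(−t(B+C)) Γ(h,x) y)`. Because `B` commutes with `C` and with `Γ(h,x')`, the
second coordinate is `exp(−tB) (Γ(h,x')⁻¹ ∘ Γ(h+tτ,x)) y`, whose norm is less than
`1 · p(‖x'‖)/p(‖x‖) · p(‖x‖) = p(‖x'‖)`; here `p(‖x'‖) > 0` since `p` strictly decreases to `p 1 = 0`.
-/

open NormedSpace

theorem NormedSpace.exp_add_of_commute_of_normedAlgebra (𝕂 : Type*) {𝔸 : Type*}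
    [NontriviallyNormedField 𝕂] [CharZero 𝕂] [ContinuousSMul ℚ 𝕂]
    [NormedRing 𝔸] [NormedAlgebra 𝕂 𝔸] [CompleteSpace 𝔸] {x y : 𝔸} (hxy : Commute x y) :
    exp (x + y) = exp x * exp y :=
  exp_add_of_commute_of_mem_ball (𝕂 := 𝕂) hxy
    ((expSeries_radius_eq_top 𝕂 𝔸).symm ▸ edist_lt_top _ _)
    ((expSeries_radius_eq_top 𝕂 𝔸).symm ▸ edist_lt_top _ _)

section Operators

variable {𝕜 E F G : Type*} [RCLike 𝕜]
  [NormedAddCommGroup E] [NormedSpace 𝕜 E] [NormedAddCommGroup F] [NormedSpace 𝕜 F]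
  [NormedAddCommGroup G] [NormedSpace 𝕜 G]

theorem ContinuousLinearEquiv.symm_exp_smul_add_apply [CompleteSpace E] {B C : E →L[𝕜] E}
    (hBC : Commute B C) (e : E ≃L[𝕜] E) (hBe : Commute B (e : E →L[𝕜] E)) (s : 𝕜) (y : E) :
    e.symm (exp (s • (B + C)) y) = exp (s • B) (e.symm (exp (s • C) y)) := by
  have hexp_symm : Commute (exp (s • B)) (e.symm : E →L[𝕜] E) :=
    ((hBe.units_inv_right (u := e.toUnit)).smul_left s).exp_left
  rw [smul_add, exp_add_of_commute_of_normedAlgebra 𝕜 ((hBC.smul_left s).smul_right s),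
    mul_apply_eq_comp]
  exact (DFunLike.congr_fun hexp_symm.eq _).symm

theorem ContinuousLinearMap.eq_one_of_comp_equiv_eq {A : F →L[𝕜] F} (e : E ≃L[𝕜] F)
    (h : A.comp (e : E →L[𝕜] F) = e) : A = 1 := by
  ext w
  simpa using DFunLike.congr_fun h (e.symm w)

theorem ContinuousLinearMap.norm_apply_apply_lt {S : F →L[𝕜] G} {T : E →L[𝕜] F} {a b : ℝ}
    {y : E} (hS : ‖S‖ ≤ 1) (hT : ‖T‖ ≤ a / b) (hy : ‖y‖ < b) (ha : 0 < a) :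
    ‖S (T y)‖ < a := by
  have hb : 0 < b := (norm_nonneg y).trans_lt hy
  calc ‖S (T y)‖ ≤ 1 * ‖T y‖ := (S.le_opNorm _).trans (by gcongr)
    _ ≤ a / b * ‖y‖ := by rw [one_mul]; exact T.le_of_opNorm_le hT y
    _ < a / b * b := by gcongr
    _ = a := div_mul_cancel₀ a hb.ne'

end Operators

theorem stmt_15_general {X Y : Type*} [NormedAddCommGroup X] [NormedSpace ℂ X]
    [NormedAddCommGroup Y] [NormedSpace ℂ Y] [CompleteSpace Y]
    (p : ℝ → ℝ)
    (hp_maps : ∀ s ∈ Icc (0:ℝ) 1, p s ∈ Icc (0:ℝ) 1)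
    (hp1 : p 1 = 0)
    (hp_anti : StrictAntiOn p (Icc 0 1))
    (D : Set (X × Y))
    (hD : D = {z : X × Y | ‖z.1‖ < 1 ∧ ‖z.2‖ < 1 ∧ ‖z.2‖ < p ‖z.1‖})
    (τ : X)
    (h : X → X)
    (hconv : ∀ t : ℝ, 0 ≤ t → ∀ z ∈ h '' {x : X | ‖x‖ < 1},
      z + t • τ ∈ h '' {x : X | ‖x‖ < 1})
    (hinv : X → X) (hli : ∀ x : X, ‖x‖ < 1 → hinv (h x) = x)
    (F : ℝ → X → X)
    (hF : ∀ (t : ℝ) (x : X), F t x = hinv (h x + t • τ))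
    (C : Y →L[ℂ] Y)
    (Γh : X → (Y ≃L[ℂ] Y))              -- `Γ(h,·)`, invertible
    (Γsh : ℝ → X → Y →L[ℂ] Y)           -- `Γ(h+tτ,·)`
    (hΓ_exp : ∀ t : ℝ, 0 ≤ t → ∀ x : X, ‖x‖ < 1 →
      Γsh t x = (NormedSpace.exp ((-(t : ℂ)) • C)).comp (Γh x : Y →L[ℂ] Y))
    (hΓ_bound : ∀ t : ℝ, 0 ≤ t → ∀ x : X, ‖x‖ < 1 →
      ‖((Γh (F t x)).symm : Y →L[ℂ] Y).comp (Γsh t x)‖ ≤ p ‖F t x‖ / p ‖x‖)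
    (B : Y →L[ℂ] Y)
    (hB_contr : ∀ t : ℝ, 0 ≤ t → ‖NormedSpace.exp ((-(t : ℂ)) • B)‖ ≤ 1)
    (hBC : B.comp C = C.comp B)
    (hBΓ : ∀ x : X, ‖x‖ < 1 →
      B.comp (Γh x : Y →L[ℂ] Y) = (Γh x : Y →L[ℂ] Y).comp B)
    (Φh : X × Y → X × Y)
    (hΦh : ∀ z : X × Y, Φh z = (h z.1, Γh z.1 z.2)) :
    (∀ ζ ∈ Φh '' D, ∀ t : ℝ, 0 ≤ t →
      ((ζ.1 + t • τ, (NormedSpace.exp ((-(t : ℂ)) • (B + C))) ζ.2) : X × Y)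
        ∈ Φh '' D) ∧
    ((∀ t : ℝ, 0 ≤ t → ∀ x : X, ‖x‖ < 1 → Γsh t x = (Γh x : Y →L[ℂ] Y)) → B = 0 →
      ∀ ζ ∈ Φh '' D, ∀ t : ℝ, 0 ≤ t →
        ζ + t • ((τ, (0 : Y)) : X × Y) ∈ Φh '' D) := by
  have key : ∀ ζ ∈ Φh '' D, ∀ t : ℝ, 0 ≤ t →
      ((ζ.1 + t • τ, (exp ((-(t : ℂ)) • (B + C))) ζ.2) : X × Y) ∈ Φh '' D := by
    rintro _ ⟨⟨x, y⟩, hxy, rfl⟩ t ht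
    rw [hD] at hxy ⊢
    obtain ⟨hx, -, hy⟩ := hxy
    obtain ⟨x', hx', hhx'⟩ := hconv t ht (h x) ⟨x, hx, rfl⟩
    have hFx : F t x = x' := by rw [hF, ← hhx', hli x' hx']
    have hpx' : 0 < p ‖x'‖ := hp1 ▸ hp_anti ⟨norm_nonneg _, hx'.le⟩ ⟨zero_le_one, le_rfl⟩ hx'
    have hw : ‖(Γh x').symm (exp ((-(t : ℂ)) • (B + C)) (Γh x y))‖ < p ‖x'‖ := by
      have hΓsh : Γsh t x y = exp ((-(t : ℂ)) • C) (Γh x y) := by rw [hΓ_exp t ht x hx]; rfl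
      rw [ContinuousLinearEquiv.symm_exp_smul_add_apply hBC _ (hBΓ x' hx'), ← hΓsh, ← hFx]
      exact ContinuousLinearMap.norm_apply_apply_lt (hB_contr t ht) (hΓ_bound t ht x hx) hy
        (hFx ▸ hpx')
    refine ⟨(x', _), ⟨hx', hw.trans_le (hp_maps _ ⟨norm_nonneg _, hx'.le⟩).2, hw⟩, ?_⟩
    simp [hΦh, hhx']
  refine ⟨key, fun hΓid hB0 ζ hζ t ht => ?_⟩
  have hC : exp ((-(t : ℂ)) • C) = 1 :=
    ContinuousLinearMap.eq_one_of_comp_equiv_eq (Γh 0)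
      ((hΓ_exp t ht 0 (by simp)).symm.trans (hΓid t ht 0 (by simp)))
  have hcurve := key ζ hζ t ht
  rw [hB0, zero_add, hC, one_apply_eq_self] at hcurve
  convert hcurve using 1
  ext <;> simp

/-- Theorem 5.2 (convexity in one direction): let `h : 𝔻₁ → X` be injective and convex
in the direction `τ` (`‖τ‖ = 1`), `F_t = h⁻¹ ∘ (·+tτ) ∘ h`. If
`Γ(h+tτ, x) = exp(−tC) ∘ Γ(h,x)` with the norm bound
`‖Γ(h, F_t x)⁻¹ ∘ Γ(h+tτ, x)‖ ≤ p ‖F_t x‖ / p ‖x‖`, and `B ∈ L(Y)` satisfies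
`‖exp(−tB)‖ ≤ 1`, commutes with `C` and with every `Γ(h,x)`, then for each
`(z,w) ∈ Φ[h](𝔻)` the set `Φ[h](𝔻)` contains the curve `{(z+tτ, exp(−t(B+C))w) : t ≥ 0}`.
In particular, if `Γ(h+tτ,x) = Γ(h,x)` for all `t,x` and `B = 0`, then `Φ[h]` is convex
in the direction `(τ,0)`. -/
theorem stmt_15 {X Y : Type*} [NormedAddCommGroup X] [NormedSpace ℂ X] [CompleteSpace X]
    [NormedAddCommGroup Y] [NormedSpace ℂ Y] [CompleteSpace Y]
    (p : ℝ → ℝ)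
    (hp_cont : ContinuousOn p (Icc 0 1))
    (hp_maps : ∀ s ∈ Icc (0:ℝ) 1, p s ∈ Icc (0:ℝ) 1)
    (hp0 : p 0 = 1) (hp1 : p 1 = 0)
    (hp_anti : StrictAntiOn p (Icc 0 1))
    (D : Set (X × Y))
    (hD : D = {z : X × Y | ‖z.1‖ < 1 ∧ ‖z.2‖ < 1 ∧ ‖z.2‖ < p ‖z.1‖})
    (τ : X) (hτ : ‖τ‖ = 1)
    (h : X → X) (hinj : InjOn h {x : X | ‖x‖ < 1})
    (hconv : ∀ t : ℝ, 0 ≤ t → ∀ z ∈ h '' {x : X | ‖x‖ < 1},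
      z + t • τ ∈ h '' {x : X | ‖x‖ < 1})
    (hinv : X → X) (hli : ∀ x : X, ‖x‖ < 1 → hinv (h x) = x)
    (F : ℝ → X → X)
    (hF : ∀ (t : ℝ) (x : X), F t x = hinv (h x + t • τ))
    (C : Y →L[ℂ] Y)
    (Γh : X → (Y ≃L[ℂ] Y))              -- `Γ(h,·)`, invertible
    (Γsh : ℝ → X → Y →L[ℂ] Y)           -- `Γ(h+tτ,·)`
    (hΓ_exp : ∀ t : ℝ, 0 ≤ t → ∀ x : X, ‖x‖ < 1 →
      Γsh t x = (NormedSpace.exp ((-(t : ℂ)) • C)).comp (Γh x : Y →L[ℂ] Y))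
    (hΓ_bound : ∀ t : ℝ, 0 ≤ t → ∀ x : X, ‖x‖ < 1 →
      ‖((Γh (F t x)).symm : Y →L[ℂ] Y).comp (Γsh t x)‖ ≤ p ‖F t x‖ / p ‖x‖)
    (B : Y →L[ℂ] Y)
    (hB_contr : ∀ t : ℝ, 0 ≤ t → ‖NormedSpace.exp ((-(t : ℂ)) • B)‖ ≤ 1)
    (hBC : B.comp C = C.comp B)
    (hBΓ : ∀ x : X, ‖x‖ < 1 →
      B.comp (Γh x : Y →L[ℂ] Y) = (Γh x : Y →L[ℂ] Y).comp B)
    (Φh : X × Y → X × Y)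
    (hΦh : ∀ z : X × Y, Φh z = (h z.1, Γh z.1 z.2)) :
    (∀ ζ ∈ Φh '' D, ∀ t : ℝ, 0 ≤ t →
      ((ζ.1 + t • τ, (NormedSpace.exp ((-(t : ℂ)) • (B + C))) ζ.2) : X × Y)
        ∈ Φh '' D) ∧
    ((∀ t : ℝ, 0 ≤ t → ∀ x : X, ‖x‖ < 1 → Γsh t x = (Γh x : Y →L[ℂ] Y)) → B = 0 →
      ∀ ζ ∈ Φh '' D, ∀ t : ℝ, 0 ≤ t →
        ζ + t • ((τ, (0 : Y)) : X × Y) ∈ Φh '' D) :=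
  stmt_15_general p hp_maps hp1 hp_anti D hD τ h hconv hinv hli F hF C Γh Γsh hΓ_exp hΓ_bound B
    hB_contr hBC hBΓ Φh hΦh
end

section
/- Let ‖·‖_Z denote the norm on Z = X × Y given by the Minkowski functional of 𝔻 (so that 𝔻 is the open unit ball of ‖·‖_Z). Let h : 𝔻₁ → X and Γ(h,·) : 𝔻₁ → L(Y) be Fréchet differentiable and suppose: (i) sup_{x∈𝔻₁} ‖h'(x)‖_{L(X)}·(1−‖x‖²) < ∞; (ii) sup_{x∈𝔻₁} ‖Γ(h,x)‖_{L(Y)}·(1−‖x‖²) < ∞; (iii) sup_{x∈𝔻₁} ‖(∂/∂x)Γ(h,x)‖_{L(X,L(Y))}·p(‖x‖)·(1−‖x‖²) < ∞. Then the extension Φ[h](x,y) := (h(x), Γ(h,x)y) satisfies sup_{(x,y)∈𝔻} ‖Φ[h]'(x,y)‖_{L(Z)}·(1−‖(x,y)‖_Z²) < ∞, where Φ[h]'(x,y) denotes the Fréchet derivative of Φ[h] at (x,y) and its operator norm is taken with respect to ‖·‖_Z. -/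
/-!
Since `p` is continuous at `0` with `p 0 = 1`, the domain `𝔻` contains a ball of some radius `r`
about the origin, so `‖·‖_Z ≤ ‖·‖ / r`. Since `𝔻 ⊆ 𝔻₁ × Y`, also `‖x‖ ≤ ‖(x, y)‖_Z`, hence
`1 - ‖(x, y)‖_Z² ≤ 1 - ‖x‖²`. It therefore suffices to bound `‖Φ'(x, y) ζ‖ (1 - ‖x‖²)` in the
product norm, and `Φ'(x, y) (ξ, η) = (h'(x) ξ, Γ(x) η + (∂ₓΓ(x) ξ) y)` is bounded termwise by
(i)–(iii), using `‖y‖ < p ‖x‖` for the last term.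
-/

open Set Filter Topology

theorem norm_fst_le_gauge {E F : Type*} [SeminormedAddCommGroup E] [NormedSpace ℝ E]
    [AddCommGroup F] [Module ℝ F] {s : Set (E × F)} (hs : Absorbent ℝ s)
    (hsub : ∀ z ∈ s, ‖z.1‖ < 1) (z : E × F) : ‖z.1‖ ≤ gauge s z := by
  let q : Seminorm ℝ (E × F) := (normSeminorm ℝ E).comp (LinearMap.fst ℝ E F)
  have hq : s ⊆ q.ball 0 1 := fun w hw => by simpa [q, Seminorm.mem_ball] using hsub w hw
  simpa [q, Seminorm.gauge_ball] using gauge_mono hs hq z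

theorem setOf_norm_snd_lt_comp_norm_fst_mem_nhds_zero {E F : Type*} [SeminormedAddCommGroup E]
    [SeminormedAddCommGroup F] {p : ℝ → ℝ} (hp : ContinuousWithinAt p (Icc 0 1) 0)
    (hp0 : 0 < p 0) :
    {z : E × F | ‖z.1‖ < 1 ∧ ‖z.2‖ < 1 ∧ ‖z.2‖ < p ‖z.1‖} ∈ 𝓝 0 := by
  have h₁ : Tendsto (fun z : E × F => ‖z.1‖) (𝓝 0) (𝓝 0) := by
    simpa using (continuous_fst.norm.tendsto (0 : E × F))
  have h₂ : Tendsto (fun z : E × F => ‖z.2‖) (𝓝 0) (𝓝 0) := by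
    simpa using (continuous_snd.norm.tendsto (0 : E × F))
  have h₁' : Tendsto (fun z : E × F => ‖z.1‖) (𝓝 0) (𝓝[Icc 0 1] 0) := by
    refine tendsto_nhdsWithin_iff.2 ⟨h₁, ?_⟩
    filter_upwards [h₁.eventually (gt_mem_nhds one_pos)] with z hz
    exact ⟨norm_nonneg _, hz.le⟩
  filter_upwards [h₁.eventually (gt_mem_nhds one_pos), h₂.eventually (gt_mem_nhds one_pos),
    h₂.eventually_lt (hp.tendsto.comp h₁') hp0] with z hz₁ hz₂ hz₃
  exact ⟨hz₁, hz₂, hz₃⟩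

section Extension

variable {𝕜 X Y V W : Type*} [NontriviallyNormedField 𝕜] [NormedAddCommGroup X] [NormedSpace 𝕜 X]
  [NormedAddCommGroup Y] [NormedSpace 𝕜 Y] [NormedAddCommGroup V] [NormedSpace 𝕜 V]
  [NormedAddCommGroup W] [NormedSpace 𝕜 W]

theorem fderiv_prodMk_clm_apply {h : X → V} {Γ : X → Y →L[𝕜] W} {z : X × Y}
    (hh : DifferentiableAt 𝕜 h z.1) (hΓ : DifferentiableAt 𝕜 Γ z.1) (ζ : X × Y) :
    fderiv 𝕜 (fun w : X × Y => (h w.1, Γ w.1 w.2)) z ζ =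
      (fderiv 𝕜 h z.1 ζ.1, Γ z.1 ζ.2 + fderiv 𝕜 Γ z.1 ζ.1 z.2) := by
  have hh' : HasFDerivAt (fun w : X × Y => h w.1) _ z := hh.hasFDerivAt.comp z hasFDerivAt_fst
  have hΓ' : HasFDerivAt (fun w : X × Y => Γ w.1 w.2) _ z :=
    (hΓ.hasFDerivAt.comp z hasFDerivAt_fst).clm_apply hasFDerivAt_snd
  rw [(hh'.prodMk hΓ').fderiv]
  simp

theorem norm_prodMk_add_clm_apply_mul_le {A : X →L[𝕜] V} {B : Y →L[𝕜] W}
    {C : X →L[𝕜] Y →L[𝕜] W} {y : Y} {ζ : X × Y} {t ρ M₁ M₂ M₃ : ℝ} (ht : 0 ≤ t)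
    (hζ₁ : ‖ζ.1‖ ≤ 1) (hζ₂ : ‖ζ.2‖ ≤ 1) (hy : ‖y‖ ≤ ρ)
    (hA : ‖A‖ * t ≤ M₁) (hB : ‖B‖ * t ≤ M₂) (hC : ‖C‖ * ρ * t ≤ M₃) :
    ‖(A ζ.1, B ζ.2 + C ζ.1 y)‖ * t ≤ max M₁ (M₂ + M₃) := by
  have hAζ : ‖A ζ.1‖ ≤ ‖A‖ := by simpa using A.le_opNorm_of_le hζ₁
  have hBζ : ‖B ζ.2‖ ≤ ‖B‖ := by simpa using B.le_opNorm_of_le hζ₂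
  have hCζ : ‖C ζ.1 y‖ ≤ ‖C‖ * ρ := calc
    ‖C ζ.1 y‖ ≤ ‖C ζ.1‖ * ‖y‖ := (C ζ.1).le_opNorm y
    _ ≤ ‖C‖ * ρ := by gcongr; simpa using C.le_opNorm_of_le hζ₁
  rw [Prod.norm_def, max_mul_of_nonneg _ _ ht]
  refine max_le_max ((mul_le_mul_of_nonneg_right hAζ ht).trans hA) ?_
  calc ‖B ζ.2 + C ζ.1 y‖ * t ≤ (‖B‖ + ‖C‖ * ρ) * t := by gcongr; exact norm_add_le_of_le hBζ hCζ
    _ ≤ M₂ + M₃ := by linarith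

end Extension

theorem stmt_16_general {X Y : Type*} [NormedAddCommGroup X] [NormedSpace ℂ X]
    [NormedAddCommGroup Y] [NormedSpace ℂ Y]
    (p : ℝ → ℝ)
    (hp_cont : ContinuousOn p (Icc 0 1))
    (hp0 : p 0 = 1)
    (D : Set (X × Y))
    (hD : D = {z : X × Y | ‖z.1‖ < 1 ∧ ‖z.2‖ < 1 ∧ ‖z.2‖ < p ‖z.1‖})
    (h : X → X) (Γ : X → Y →L[ℂ] Y)
    (hdiff : ∀ x : X, ‖x‖ < 1 → DifferentiableAt ℂ h x)
    (hΓdiff : ∀ x : X, ‖x‖ < 1 → DifferentiableAt ℂ Γ x)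
    (M₁ : ℝ) (hM₁ : ∀ x : X, ‖x‖ < 1 → ‖fderiv ℂ h x‖ * (1 - ‖x‖ ^ 2) ≤ M₁)
    (M₂ : ℝ) (hM₂ : ∀ x : X, ‖x‖ < 1 → ‖Γ x‖ * (1 - ‖x‖ ^ 2) ≤ M₂)
    (M₃ : ℝ) (hM₃ : ∀ x : X, ‖x‖ < 1 →
      ‖fderiv ℂ Γ x‖ * p ‖x‖ * (1 - ‖x‖ ^ 2) ≤ M₃)
    (Φ : X × Y → X × Y)
    (hΦ : ∀ z : X × Y, Φ z = (h z.1, Γ z.1 z.2)) :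
    ∃ M : ℝ, ∀ z ∈ D, ∀ ζ ∈ D,
      gauge D (fderiv ℂ Φ z ζ) * (1 - gauge D z ^ 2) ≤ M := by
  have hD₀ : D ∈ 𝓝 0 :=
    hD ▸ setOf_norm_snd_lt_comp_norm_fst_mem_nhds_zero (hp_cont 0 ⟨le_rfl, zero_le_one⟩)
      (hp0 ▸ one_pos)
  obtain ⟨r, hr, hball⟩ := Metric.mem_nhds_iff.1 hD₀
  have hD₁ : ∀ w ∈ D, ‖w.1‖ < 1 := fun w hw => by rw [hD] at hw; exact hw.1
  have habs : Absorbent ℝ D := absorbent_nhds_zero hD₀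
  refine ⟨max M₁ (M₂ + M₃) / r, fun z hz ζ hζ => ?_⟩
  have hgz₁ : gauge D z ≤ 1 := gauge_le_one_of_mem hz
  have hgz : ‖z.1‖ ≤ gauge D z := norm_fst_le_gauge habs hD₁ z
  rw [hD] at hz hζ
  obtain ⟨hz₁, -, hz₃⟩ := hz
  obtain ⟨hζ₁, hζ₂, -⟩ := hζ
  have hΦ' : fderiv ℂ Φ z ζ = (fderiv ℂ h z.1 ζ.1, Γ z.1 ζ.2 + fderiv ℂ Γ z.1 ζ.1 z.2) := by
    rw [funext hΦ]
    exact fderiv_prodMk_clm_apply (hdiff _ hz₁) (hΓdiff _ hz₁) ζ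
  have hbound : ‖fderiv ℂ Φ z ζ‖ * (1 - ‖z.1‖ ^ 2) ≤ max M₁ (M₂ + M₃) := by
    rw [hΦ']
    exact norm_prodMk_add_clm_apply_mul_le (by nlinarith [norm_nonneg z.1]) hζ₁.le hζ₂.le
      hz₃.le (hM₁ _ hz₁) (hM₂ _ hz₁) (hM₃ _ hz₁)
  calc gauge D (fderiv ℂ Φ z ζ) * (1 - gauge D z ^ 2)
      ≤ ‖fderiv ℂ Φ z ζ‖ / r * (1 - ‖z.1‖ ^ 2) :=
        mul_le_mul ((le_div_iff₀' hr).2 (mul_gauge_le_norm hball))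
          (by nlinarith [norm_nonneg z.1]) (by nlinarith [gauge_nonneg (s := D) z])
          (by positivity)
    _ = ‖fderiv ℂ Φ z ζ‖ * (1 - ‖z.1‖ ^ 2) / r := by ring
    _ ≤ max M₁ (M₂ + M₃) / r := by gcongr

/-- Bloch-type property of the extension (Proposition 6.1): if `h` and `Γ(h,·)` are
Fréchet differentiable on `𝔻₁` with (i) `sup ‖h'(x)‖(1−‖x‖²) < ∞`,
(ii) `sup ‖Γ(h,x)‖(1−‖x‖²) < ∞`, (iii) `sup ‖∂ₓΓ(h,x)‖ p(‖x‖)(1−‖x‖²) < ∞`, then the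
extension `Φ[h](x,y) = (h x, Γ(h,x) y)` satisfies
`sup_{(x,y)∈𝔻} ‖Φ[h]'(x,y)‖_{L(Z)} (1−‖(x,y)‖_Z²) < ∞`, where `‖·‖_Z` is the
Minkowski functional (gauge) of `𝔻` and the operator norm of `T = Φ[h]'(x,y)` with
respect to `‖·‖_Z` is computed as the supremum of `gauge 𝔻 (T ζ)` over `ζ ∈ 𝔻`. -/
theorem stmt_16 {X Y : Type*} [NormedAddCommGroup X] [NormedSpace ℂ X] [CompleteSpace X]
    [NormedAddCommGroup Y] [NormedSpace ℂ Y] [CompleteSpace Y]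
    (p : ℝ → ℝ)
    (hp_cont : ContinuousOn p (Icc 0 1))
    (hp_maps : ∀ s ∈ Icc (0:ℝ) 1, p s ∈ Icc (0:ℝ) 1)
    (hp0 : p 0 = 1) (hp1 : p 1 = 0)
    (hp_anti : StrictAntiOn p (Icc 0 1))
    (hp_conc : ∀ s₁ ∈ Icc (0:ℝ) 1, ∀ s₂ ∈ Icc (0:ℝ) 1,
      (p s₁ + p s₂) / 2 ≤ p ((s₁ + s₂) / 2))
    (D : Set (X × Y))
    (hD : D = {z : X × Y | ‖z.1‖ < 1 ∧ ‖z.2‖ < 1 ∧ ‖z.2‖ < p ‖z.1‖})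
    (h : X → X) (Γ : X → Y →L[ℂ] Y)
    (hdiff : ∀ x : X, ‖x‖ < 1 → DifferentiableAt ℂ h x)
    (hΓdiff : ∀ x : X, ‖x‖ < 1 → DifferentiableAt ℂ Γ x)
    (M₁ : ℝ) (hM₁ : ∀ x : X, ‖x‖ < 1 → ‖fderiv ℂ h x‖ * (1 - ‖x‖ ^ 2) ≤ M₁)
    (M₂ : ℝ) (hM₂ : ∀ x : X, ‖x‖ < 1 → ‖Γ x‖ * (1 - ‖x‖ ^ 2) ≤ M₂)
    (M₃ : ℝ) (hM₃ : ∀ x : X, ‖x‖ < 1 →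
      ‖fderiv ℂ Γ x‖ * p ‖x‖ * (1 - ‖x‖ ^ 2) ≤ M₃)
    (Φ : X × Y → X × Y)
    (hΦ : ∀ z : X × Y, Φ z = (h z.1, Γ z.1 z.2)) :
    ∃ M : ℝ, ∀ z ∈ D, ∀ ζ ∈ D,
      gauge D (fderiv ℂ Φ z ζ) * (1 - gauge D z ^ 2) ≤ M :=
  stmt_16_general p hp_cont hp0 D hD h Γ hdiff hΓdiff M₁ hM₁ M₂ hM₂ M₃ hM₃ Φ hΦ
end

section
/- Let n ≥ 1 be an integer and let r ≥ 1, 1 ≤ q ≤ 2 and 0 < α ≤ 2/(r(n+1)) be real numbers. Then the function t ↦ (1−t²)^{(n+1)α/2}/(1−t^q)^{1/r} is monotonically increasing on the interval (0,1); equivalently, for all 0 < a ≤ b < 1 one has (1−a²)^{(n+1)α/2}·(1−b^q)^{1/r} ≤ (1−b²)^{(n+1)α/2}·(1−a^q)^{1/r}. -/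
/-!
Write `u = t²` and `s = q / 2 ∈ (0, 1]`. Since `u ↦ u ^ s` is concave, its secant slope
`(1 - u ^ s) / (1 - u)` towards `1` is nonincreasing, so `(1 - t ^ q) / (1 - t²)` decreases.
For `a ≤ b` the ratio `R = (1 - a²) / (1 - b²)` is at least `1`, hence with
`β = (n + 1) α / 2 ≤ 1 / r` we get
`R ^ β ≤ R ^ (1 / r) ≤ ((1 - a ^ q) / (1 - b ^ q)) ^ (1 / r)`.
-/

open Set Real

lemma one_sub_rpow_div_one_sub_le {s u v : ℝ} (hs0 : 0 ≤ s) (hs1 : s ≤ 1)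
    (hu : 0 ≤ u) (huv : u ≤ v) (hv : v < 1) :
    (1 - v ^ s) / (1 - v) ≤ (1 - u ^ s) / (1 - u) := by
  have h := (concaveOn_rpow hs0 hs1).neg.secant_mono (a := 1) (x := u) (y := v)
    (mem_Ici.2 zero_le_one) hu (hu.trans huv) (by linarith) hv.ne huv
  have slope_eq (w : ℝ) : (-w ^ s - -1) / (w - 1) = -((1 - w ^ s) / (1 - w)) := by
    rw [← neg_div, ← neg_div_neg_eq]; ring_nf
  simp only [Pi.neg_apply, one_rpow, slope_eq] at h
  exact neg_le_neg_iff.1 h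

lemma one_sub_rpow_div_one_sub_sq_le {q a b : ℝ} (hq0 : 0 ≤ q) (hq2 : q ≤ 2)
    (ha : 0 ≤ a) (hab : a ≤ b) (hb : b < 1) :
    (1 - b ^ q) / (1 - b ^ (2 : ℝ)) ≤ (1 - a ^ q) / (1 - a ^ (2 : ℝ)) := by
  have sq_rpow (t : ℝ) (ht : 0 ≤ t) : (t ^ (2 : ℝ)) ^ (q / 2) = t ^ q := by
    rw [← rpow_mul ht]; ring_nf
  have h := one_sub_rpow_div_one_sub_le (s := q / 2) (by positivity) (by linarith)
    (rpow_nonneg ha 2) (rpow_le_rpow ha hab zero_le_two)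
    (rpow_lt_one (ha.trans hab) hb two_pos)
  rwa [sq_rpow a ha, sq_rpow b (ha.trans hab)] at h

lemma monotoneOn_rpow_one_sub_sq_div_rpow_one_sub_rpow {q β γ : ℝ} (hq0 : 0 < q)
    (hq2 : q ≤ 2) (hγ : 0 ≤ γ) (hβγ : β ≤ γ) :
    MonotoneOn (fun t : ℝ => (1 - t ^ (2 : ℝ)) ^ β / (1 - t ^ q) ^ γ) (Ico 0 1) := by
  intro a ⟨ha, ha1⟩ b ⟨hb, hb1⟩ hab
  have one_sub_pos {p t : ℝ} (hp : 0 < p) (ht : 0 ≤ t) (ht1 : t < 1) : 0 < 1 - t ^ p :=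
    sub_pos.2 (rpow_lt_one ht ht1 hp)
  have hA := one_sub_pos two_pos ha ha1
  have hB := one_sub_pos two_pos hb hb1
  have hC := one_sub_pos hq0 ha ha1
  have hD := one_sub_pos hq0 hb hb1
  have hAB : 1 ≤ (1 - a ^ (2 : ℝ)) / (1 - b ^ (2 : ℝ)) :=
    (one_le_div hB).2 (by gcongr)
  have hratio : (1 - a ^ (2 : ℝ)) / (1 - b ^ (2 : ℝ)) ≤ (1 - a ^ q) / (1 - b ^ q) := by
    rw [div_le_div_iff₀ hB hD, mul_comm, ← div_le_div_iff₀ hB hA]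
    exact one_sub_rpow_div_one_sub_sq_le hq0.le hq2 ha hab hb1
  simp only
  calc (1 - a ^ (2 : ℝ)) ^ β / (1 - a ^ q) ^ γ
      = ((1 - a ^ (2 : ℝ)) / (1 - b ^ (2 : ℝ))) ^ β * (1 - b ^ (2 : ℝ)) ^ β
          / (1 - a ^ q) ^ γ := by
        rw [div_rpow hA.le hB.le, div_mul_cancel₀ _ (rpow_pos_of_pos hB β).ne']
    _ ≤ ((1 - a ^ q) / (1 - b ^ q)) ^ γ * (1 - b ^ (2 : ℝ)) ^ β / (1 - a ^ q) ^ γ := by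
        gcongr
        calc _ ≤ ((1 - a ^ (2 : ℝ)) / (1 - b ^ (2 : ℝ))) ^ γ :=
              rpow_le_rpow_of_exponent_le hAB hβγ
          _ ≤ _ := by gcongr
    _ = (1 - b ^ (2 : ℝ)) ^ β / (1 - b ^ q) ^ γ := by
        rw [div_rpow hC.le hD.le]
        field_simp

theorem stmt_17_general (n : ℕ) (r q α : ℝ)
    (hr : 1 ≤ r) (hq1 : 1 ≤ q) (hq2 : q ≤ 2)
    (hα : α ≤ 2 / (r * (n + 1))) :
    MonotoneOn (fun t : ℝ =>
        (1 - t ^ (2:ℝ)) ^ (((n : ℝ) + 1) * α / 2) / (1 - t ^ q) ^ (1 / r))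
      (Ioo (0:ℝ) 1) ∧
    ∀ a b : ℝ, 0 < a → a ≤ b → b < 1 →
      (1 - a ^ (2:ℝ)) ^ (((n : ℝ) + 1) * α / 2) * (1 - b ^ q) ^ (1 / r) ≤
      (1 - b ^ (2:ℝ)) ^ (((n : ℝ) + 1) * α / 2) * (1 - a ^ q) ^ (1 / r) := by
  have hr0 : 0 < r := by linarith
  have hβ : ((n : ℝ) + 1) * α / 2 ≤ 1 / r :=
    calc ((n : ℝ) + 1) * α / 2 ≤ ((n : ℝ) + 1) * (2 / (r * (n + 1))) / 2 := by gcongr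
      _ = 1 / r := by field_simp
  have hmono := (monotoneOn_rpow_one_sub_sq_div_rpow_one_sub_rpow (by linarith) hq2
    (by positivity) hβ).mono Ioo_subset_Ico_self
  refine ⟨hmono, fun a b ha hab hb => ?_⟩
  have hden {t : ℝ} (ht : 0 < t) (ht1 : t < 1) : 0 < (1 - t ^ q) ^ (1 / r) :=
    rpow_pos_of_pos (sub_pos.2 (rpow_lt_one ht.le ht1 (by linarith))) _
  have ha1 := hab.trans_lt hb
  have hb0 := ha.trans_le hab
  exact (div_le_div_iff₀ (hden ha ha1) (hden hb0 hb)).1 (hmono ⟨ha, ha1⟩ ⟨hb0, hb⟩ hab)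

/-- For an integer `n ≥ 1` and real numbers `r ≥ 1`, `1 ≤ q ≤ 2`,
`0 < α ≤ 2/(r(n+1))`, the function `t ↦ (1−t²)^{(n+1)α/2} / (1−t^q)^{1/r}` is
monotonically increasing on `(0,1)`; equivalently, for `0 < a ≤ b < 1`,
`(1−a²)^{(n+1)α/2} (1−b^q)^{1/r} ≤ (1−b²)^{(n+1)α/2} (1−a^q)^{1/r}`. -/
theorem stmt_17 (n : ℕ) (hn : 1 ≤ n) (r q α : ℝ)
    (hr : 1 ≤ r) (hq1 : 1 ≤ q) (hq2 : q ≤ 2)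
    (hα0 : 0 < α) (hα : α ≤ 2 / (r * (n + 1))) :
    MonotoneOn (fun t : ℝ =>
        (1 - t ^ (2:ℝ)) ^ (((n : ℝ) + 1) * α / 2) / (1 - t ^ q) ^ (1 / r))
      (Ioo (0:ℝ) 1) ∧
    ∀ a b : ℝ, 0 < a → a ≤ b → b < 1 →
      (1 - a ^ (2:ℝ)) ^ (((n : ℝ) + 1) * α / 2) * (1 - b ^ q) ^ (1 / r) ≤
      (1 - b ^ (2:ℝ)) ^ (((n : ℝ) + 1) * α / 2) * (1 - a ^ q) ^ (1 / r) :=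
  stmt_17_general n r q α hr hq1 hq2 hα
end
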